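/- arXiv:2112.14525 — 4 statements merged into one kernel-verified Lean document; each statement's English description precedes it below -/
import Mathlib

section
/- Let H be a real Hilbert space, C ⊆ H a nonempty closed convex subset, and T, U : C → C nonexpansive maps such that F := Fix(T) ∩ Fix(U) is nonempty. Let u, x₀ ∈ C and let (α_n) ⊂ [0,1], (β_n) ⊂ (0,1) satisfy: (i) lim α_n = 0; (ii) ∑ α_n = ∞; (iii) ∑ |α_{n+1} − α_n| < ∞; (iv) ∑ |β_{n+1} − β_n| < ∞; (v) 0 < liminf β_n ≤ limsup β_n < 1. Then the alternating Halpern–Mann iteration (x_n) with anchor u and starting point x₀ converges strongly to a point z ∈ F satisfying ‖u − z‖ ≤ ‖u − y‖ for all y ∈ F (the metric projection of u onto F). -/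
/-!
Write `y n = x (2 n)` and `v n = x (2 n + 1)`. Neither step increases the distance to a common
fixed point `p`, so the iterates are bounded. Consecutive differences `‖y (n+1) - y n‖` contract by
`1 - α (n+1)` up to errors controlled by `|α (n+1) - α n|` and `|β (n+1) - β n|`, so they tend
to `0` by Xu's lemma. The Mann step then gives
`β n (1 - β n) ‖v n - U (v n)‖² ≤ ‖y n - p‖² - ‖y (n+1) - p‖² + α n ‖u - p‖²`, and since
`β n (1 - β n)` stays away from `0` the odd iterates are approximate fixed points of `T` and `U`.
By weak compactness and demiclosedness their weak cluster points lie in `F`, so the variational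
inequality characterising `z = P_F u` yields `limsup ⟪u - z, v n - z⟫ ≤ 0`, and Xu's lemma applied
to `‖y n - z‖²` gives strong convergence.
-/

open Filter Topology
open scoped RealInnerProductSpace

theorem tendsto_sum_range_nat_add_atTop {t : ℕ → ℝ}
    (ht : Tendsto (fun n => ∑ i ∈ Finset.range n, t i) atTop atTop) (N : ℕ) :
    Tendsto (fun n => ∑ i ∈ Finset.range n, t (i + N)) atTop atTop := by
  have hshift : ∀ n, ∑ i ∈ Finset.range n, t (i + N) =
      ∑ i ∈ Finset.range (n + N), t i - ∑ i ∈ Finset.range N, t i := by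
    intro n
    rw [add_comm n N, Finset.sum_range_add]
    simp [add_comm]
  simp only [hshift]
  exact tendsto_atTop_add_const_right _ _ ((tendsto_add_atTop_iff_nat N).2 ht)

theorem tendsto_zero_of_le_one_sub_mul {d t : ℕ → ℝ} (hd : ∀ n, 0 ≤ d n)
    (hrec : ∀ n, d (n + 1) ≤ (1 - t n) * d n)
    (ht : Tendsto (fun n => ∑ i ∈ Finset.range n, t i) atTop atTop) :
    Tendsto d atTop (𝓝 0) := by
  have hexp : ∀ n, d n ≤ Real.exp (-∑ i ∈ Finset.range n, t i) * d 0 := by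
    intro n
    induction n with
    | zero => simp
    | succ n ih =>
      calc d (n + 1) ≤ (1 - t n) * d n := hrec n
        _ ≤ Real.exp (-t n) * d n := by
          gcongr
          · exact hd n
          · linarith [Real.add_one_le_exp (-t n)]
        _ ≤ Real.exp (-t n) * (Real.exp (-∑ i ∈ Finset.range n, t i) * d 0) := by gcongr
        _ = _ := by rw [Finset.sum_range_succ, neg_add, Real.exp_add]; ring
  have hlim : Tendsto (fun n => Real.exp (-∑ i ∈ Finset.range n, t i) * d 0) atTop (𝓝 0) := by
    simpa using (Real.tendsto_exp_atBot.comp (tendsto_neg_atTop_atBot.comp ht)).mul_const (d 0)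
  exact squeeze_zero hd hexp hlim

theorem tendsto_zero_of_le_one_sub_mul_add_mul {a t b : ℕ → ℝ} (ha : ∀ n, 0 ≤ a n)
    (ht : ∀ n, t n ∈ Set.Icc (0 : ℝ) 1)
    (hrec : ∀ n, a (n + 1) ≤ (1 - t n) * a n + t n * b n)
    (hdiv : Tendsto (fun n => ∑ i ∈ Finset.range n, t i) atTop atTop)
    (hb : ∀ ε > 0, ∀ᶠ n in atTop, b n ≤ ε) :
    Tendsto a atTop (𝓝 0) := by
  suffices h : ∀ ε > 0, ∀ᶠ n in atTop, a n < 2 * ε by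
    refine tendsto_order.2 ⟨fun c hc => .of_forall fun n => hc.trans_le (ha n), fun c hc => ?_⟩
    exact (h (c / 2) (by positivity)).mono fun n hn => by linarith
  intro ε hε
  obtain ⟨N, hN⟩ := eventually_atTop.mp (hb ε hε)
  -- Beyond `N` the excess `(a - ε)⁺` contracts by the factors `1 - t`.
  set d : ℕ → ℝ := fun m => max (a (m + N) - ε) 0
  have hdrec : ∀ m, d (m + 1) ≤ (1 - t (m + N)) * d m := by
    intro m
    obtain ⟨ht0, ht1⟩ := ht (m + N)
    have hstep : a (m + N + 1) - ε ≤ (1 - t (m + N)) * (a (m + N) - ε) := by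
      have := hN (m + N) (by omega)
      nlinarith [hrec (m + N)]
    have : (1 - t (m + N)) * (a (m + N) - ε) ≤ (1 - t (m + N)) * d m :=
      mul_le_mul_of_nonneg_left (le_max_left _ _) (by linarith)
    simp only [d, add_right_comm m 1 N]
    exact max_le (hstep.trans this) (mul_nonneg (by linarith) (le_max_right _ _))
  have hd : Tendsto d atTop (𝓝 0) :=
    tendsto_zero_of_le_one_sub_mul (fun m => le_max_right _ _) hdrec
      (tendsto_sum_range_nat_add_atTop hdiv N)
  obtain ⟨M, hM⟩ := eventually_atTop.mp (hd.eventually (gt_mem_nhds hε))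
  refine eventually_atTop.mpr ⟨M + N, fun n hn => ?_⟩
  obtain ⟨m, rfl⟩ : ∃ m, n = m + N := ⟨n - N, by omega⟩
  linarith [hM m (by omega), le_max_left (a (m + N) - ε) 0]

/-- Xu's lemma. -/
theorem tendsto_zero_of_le_one_sub_mul_add_mul_add {a t b c : ℕ → ℝ} (ha : ∀ n, 0 ≤ a n)
    (ht : ∀ n, t n ∈ Set.Icc (0 : ℝ) 1) (hc : ∀ n, 0 ≤ c n)
    (hrec : ∀ n, a (n + 1) ≤ (1 - t n) * a n + t n * b n + c n)
    (hdiv : Tendsto (fun n => ∑ i ∈ Finset.range n, t i) atTop atTop)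
    (hb : ∀ ε > 0, ∀ᶠ n in atTop, b n ≤ ε) (hcs : Summable c) :
    Tendsto a atTop (𝓝 0) := by
  -- Adding the tail `R n = ∑_{k ≥ n} c k` to `a` absorbs the perturbation `c`.
  set R : ℕ → ℝ := fun n => ∑' k, c (k + n)
  have hR0 : ∀ n, 0 ≤ R n := fun n => tsum_nonneg fun k => hc _
  have hRsucc : ∀ n, R n = c n + R (n + 1) := by
    intro n
    simp only [R]
    rw [((summable_nat_add_iff n).mpr hcs).tsum_eq_zero_add]
    simp only [zero_add, add_assoc, add_comm 1 n]
  have hRlim : Tendsto R atTop (𝓝 0) := tendsto_sum_nat_add c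
  have hs : Tendsto (fun n => a n + R n) atTop (𝓝 0) := by
    refine tendsto_zero_of_le_one_sub_mul_add_mul (b := fun n => b n + R n)
      (fun n => add_nonneg (ha n) (hR0 n)) ht (fun n => ?_) hdiv (fun ε hε => ?_)
    · obtain ⟨ht0, ht1⟩ := ht n
      nlinarith [hrec n, hRsucc n, hR0 n]
    · filter_upwards [hb (ε / 2) (by positivity), hRlim.eventually (gt_mem_nhds (half_pos hε))]
        with n hbn hRn
      linarith
  exact squeeze_zero ha (fun n => le_add_of_nonneg_right (hR0 n)) hs

theorem exists_pos_eventually_le_mul_one_sub {β : ℕ → ℝ} (hβ : ∀ n, β n ∈ Set.Icc (0 : ℝ) 1)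
    (hlow : 0 < liminf β atTop) (hup : limsup β atTop < 1) :
    ∃ c > 0, ∀ᶠ n in atTop, c ≤ β n * (1 - β n) := by
  refine ⟨liminf β atTop / 2 * ((1 - limsup β atTop) / 2),
    mul_pos (half_pos hlow) (half_pos (sub_pos.2 hup)), ?_⟩
  have hlo : ∀ᶠ n in atTop, liminf β atTop / 2 < β n :=
    eventually_lt_of_lt_liminf (half_lt_self hlow) (isBoundedUnder_of ⟨0, fun n => (hβ n).1⟩)
  have hhi : ∀ᶠ n in atTop, β n < (limsup β atTop + 1) / 2 :=
    eventually_lt_of_limsup_lt (by linarith) (isBoundedUnder_of ⟨1, fun n => (hβ n).2⟩)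
  filter_upwards [hlo, hhi] with n hn1 hn2
  exact mul_le_mul hn1.le (by linarith) (by linarith) (hβ n).1

theorem tendsto_of_tendsto_even_odd {X : Type*} {x : ℕ → X} {l : Filter X}
    (he : Tendsto (fun n => x (2 * n)) atTop l) (ho : Tendsto (fun n => x (2 * n + 1)) atTop l) :
    Tendsto x atTop l := by
  refine tendsto_def.2 fun s hs => ?_
  obtain ⟨N, hN⟩ := eventually_atTop.mp ((he.eventually_mem hs).and (ho.eventually_mem hs))
  refine mem_atTop_sets.2 ⟨2 * N, fun n hn => ?_⟩
  obtain ⟨m, rfl | rfl⟩ := Nat.even_or_odd' n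
  · exact (hN m (by omega)).1
  · exact (hN m (by omega)).2

theorem isClosed_inter_fixedPoints {E : Type*} [NormedAddCommGroup E] {C : Set E}
    (hcl : IsClosed C) {T : E → E} (hT : ∀ x ∈ C, ∀ y ∈ C, ‖T x - T y‖ ≤ ‖x - y‖) :
    IsClosed (C ∩ Function.fixedPoints T) := by
  have hcont : ContinuousOn T C :=
    (LipschitzOnWith.of_dist_le_mul (K := 1) fun x hx y hy => by
      simpa [dist_eq_norm] using hT x hx y hy).continuousOn
  exact (hcont.prodMk continuousOn_id).preimage_isClosed_of_isClosed hcl isClosed_diagonal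

section Normed

variable {E : Type*} [NormedAddCommGroup E] [NormedSpace ℝ E]

theorem norm_combo_sub_le {s : ℝ} (hs : s ∈ Set.Icc (0 : ℝ) 1) (a b p : E) :
    ‖(1 - s) • a + s • b - p‖ ≤ (1 - s) * ‖a - p‖ + s * ‖b - p‖ := by
  obtain ⟨hs0, hs1⟩ := hs
  rw [show (1 - s) • a + s • b - p = (1 - s) • (a - p) + s • (b - p) by module]
  refine (norm_add_le _ _).trans_eq ?_
  rw [norm_smul_of_nonneg (by linarith), norm_smul_of_nonneg hs0]

theorem norm_combo_sub_combo_le {s s' : ℝ} (hs' : s' ∈ Set.Icc (0 : ℝ) 1)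
    (a b a' b' : E) :
    ‖((1 - s') • a' + s' • b') - ((1 - s) • a + s • b)‖ ≤
      (1 - s') * ‖a' - a‖ + s' * ‖b' - b‖ + |s' - s| * ‖b - a‖ := by
  have hid : ((1 - s') • a' + s' • b') - ((1 - s) • a + s • b) =
      ((1 - s') • (a' - a) + s' • (b' - b)) + (s' - s) • (b - a) := by module
  rw [hid]
  refine (norm_add_le _ _).trans ?_
  rw [norm_smul, Real.norm_eq_abs]
  have h := norm_combo_sub_le hs' (a' - a) (b' - b) 0
  simp only [sub_zero] at h
  gcongr

theorem convex_inter_fixedPoints [StrictConvexSpace ℝ E] {C : Set E} (hconv : Convex ℝ C)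
    {T : E → E} (hT : ∀ x ∈ C, ∀ y ∈ C, ‖T x - T y‖ ≤ ‖x - y‖) :
    Convex ℝ (C ∩ Function.fixedPoints T) := by
  rintro q ⟨hqC, hq⟩ r ⟨hrC, hr⟩ a b ha hb hab
  obtain rfl : a = 1 - b := by linarith
  have hmC : (1 - b) • q + b • r ∈ C := hconv hqC hrC ha hb hab
  refine ⟨hmC, ?_⟩
  set m := (1 - b) • q + b • r
  have hqm : dist q m = b * dist q r := by
    rw [dist_eq_norm, dist_eq_norm, show q - m = b • (q - r) by module, norm_smul_of_nonneg hb]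
  have hmr : dist m r = (1 - b) * dist q r := by
    rw [dist_eq_norm, dist_eq_norm, show m - r = (1 - b) • (q - r) by module,
      norm_smul_of_nonneg ha]
  have hTq : dist q (T m) ≤ b * dist q r := by
    rw [← hqm, dist_eq_norm, dist_eq_norm]
    simpa only [hq.eq] using hT q hqC m hmC
  have hTr : dist (T m) r ≤ (1 - b) * dist q r := by
    rw [← hmr, dist_eq_norm, dist_eq_norm]
    simpa only [hr.eq] using hT m hmC r hrC
  have htri := dist_triangle q (T m) r
  have := eq_lineMap_of_dist_eq_mul_of_dist_eq_mul (by linarith : dist q (T m) = b * dist q r)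
    (by linarith : dist (T m) r = (1 - b) * dist q r)
  show T m = m
  rw [this, AffineMap.lineMap_apply_module]

end Normed

section InnerProductSpace

variable {H : Type*} [NormedAddCommGroup H] [InnerProductSpace ℝ H]

theorem norm_combo_sq (s : ℝ) (a b : H) :
    ‖(1 - s) • a + s • b‖ ^ 2 =
      (1 - s) * ‖a‖ ^ 2 + s * ‖b‖ ^ 2 - s * (1 - s) * ‖a - b‖ ^ 2 := by
  rw [norm_add_sq_real, norm_sub_sq_real, norm_smul, norm_smul, real_inner_smul_left,
    real_inner_smul_right, mul_pow, mul_pow, Real.norm_eq_abs, Real.norm_eq_abs, sq_abs, sq_abs]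
  ring

theorem norm_add_sq_le_norm_sq_add_inner (a b : H) :
    ‖a + b‖ ^ 2 ≤ ‖a‖ ^ 2 + 2 * ⟪b, a + b⟫ := by
  have h := norm_sub_sq_real (a + b) b
  rw [add_sub_cancel_right, real_inner_comm] at h
  nlinarith [sq_nonneg ‖b‖]

theorem norm_sub_le_norm_sub_of_inner_sub_nonpos {u z q : H} (h : ⟪u - z, q - z⟫ ≤ 0) :
    ‖u - z‖ ≤ ‖u - q‖ := by
  have hsq : ‖u - q‖ ^ 2 = ‖u - z‖ ^ 2 - 2 * ⟪u - z, q - z⟫ + ‖q - z‖ ^ 2 := by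
    rw [← norm_sub_sq_real, sub_sub_sub_cancel_right]
  refine le_of_pow_le_pow_left₀ two_ne_zero (norm_nonneg _) ?_
  nlinarith [sq_nonneg ‖q - z‖]

theorem Submodule.exists_strictMono_tendsto_inner (K : Submodule ℝ H) [CompleteSpace K]
    [TopologicalSpace.SeparableSpace K] {x : ℕ → H} (hxK : ∀ n, x n ∈ K) {M : ℝ}
    (hx : ∀ n, ‖x n‖ ≤ M) :
    ∃ (w : H) (φ : ℕ → ℕ), StrictMono φ ∧
      ∀ e, Tendsto (fun k => ⟪x (φ k), e⟫) atTop (𝓝 ⟪w, e⟫) := by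
  let f : ℕ → WeakDual ℝ K := fun n =>
    StrongDual.toWeakDual (InnerProductSpace.toDual ℝ K ⟨x n, hxK n⟩)
  obtain ⟨g, -, φ, hφ, hlim⟩ :=
    WeakDual.isSeqCompact_closedBall ℝ K 0 M (x := f) fun n => by simpa [f] using hx n
  set w : K := (InnerProductSpace.toDual ℝ K).symm (WeakDual.toStrongDual g)
  refine ⟨w, φ, hφ, fun e => ?_⟩
  -- Only the component of `e` in `K` is seen by the `x n` and by `w`.
  have hxe : ∀ n, f n (K.orthogonalProjectionOnto e) = ⟪x n, e⟫ := fun n => by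
    simp [f]
  have hwe : g (K.orthogonalProjectionOnto e) = ⟪(w : H), e⟫ := by
    rw [← Submodule.inner_orthogonalProjectionOnto_eq_of_mem_left,
      InnerProductSpace.toDual_symm_apply]
    rfl
  simpa only [Function.comp_def, hxe, hwe] using
    ((WeakDual.eval_continuous (K.orthogonalProjectionOnto e)).tendsto g).comp hlim

theorem exists_strictMono_tendsto_inner [CompleteSpace H] {x : ℕ → H} {M : ℝ}
    (hx : ∀ n, ‖x n‖ ≤ M) :
    ∃ (w : H) (φ : ℕ → ℕ), StrictMono φ ∧
      ∀ e, Tendsto (fun k => ⟪x (φ k), e⟫) atTop (𝓝 ⟪w, e⟫) := by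
  set K : Submodule ℝ H := (Submodule.span ℝ (Set.range x)).topologicalClosure
  have : CompleteSpace K := (Submodule.isClosed_topologicalClosure _).completeSpace_coe
  have : TopologicalSpace.SeparableSpace K := by
    have : TopologicalSpace.IsSeparable (K : Set H) := by
      rw [Submodule.topologicalClosure_coe]
      exact (Set.countable_range x).isSeparable.span.closure
    exact this.separableSpace
  exact K.exists_strictMono_tendsto_inner
    (fun n => Submodule.le_topologicalClosure _ (Submodule.subset_span ⟨n, rfl⟩)) hx

theorem exists_mem_forall_inner_sub_nonpos [CompleteSpace H] {K : Set H} (hne : K.Nonempty)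
    (hcl : IsClosed K) (hconv : Convex ℝ K) (u : H) :
    ∃ z ∈ K, ∀ q ∈ K, ⟪u - z, q - z⟫ ≤ 0 := by
  obtain ⟨z, hz, hmin⟩ := exists_norm_eq_iInf_of_complete_convex hne hcl.isComplete hconv u
  exact ⟨z, hz, (norm_eq_iInf_iff_real_inner_le_zero hconv hz).mp hmin⟩

theorem IsClosed.mem_of_tendsto_inner [CompleteSpace H] {C : Set H} (hcl : IsClosed C)
    (hconv : Convex ℝ C) {y : ℕ → H} (hy : ∀ n, y n ∈ C) {w : H}
    (hw : ∀ e, Tendsto (fun n => ⟪y n, e⟫) atTop (𝓝 ⟪w, e⟫)) : w ∈ C := by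
  obtain ⟨q, hq, hvar⟩ := exists_mem_forall_inner_sub_nonpos ⟨y 0, hy 0⟩ hcl hconv w
  have hlim : Tendsto (fun n => ⟪w - q, y n - q⟫) atTop (𝓝 ⟪w - q, w - q⟫) := by
    simpa only [inner_sub_right, real_inner_comm (w - q)] using
      (hw (w - q)).sub_const ⟪w - q, q⟫
  have hle : ‖w - q‖ ^ 2 ≤ 0 := by
    rw [← real_inner_self_eq_norm_sq]
    exact le_of_tendsto' hlim fun n => hvar _ (hy n)
  have hwq : w = q := by
    rw [← sub_eq_zero, ← norm_eq_zero]
    nlinarith [norm_nonneg (w - q)]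
  exact hwq ▸ hq

/-- Browder's demiclosedness principle. -/
theorem apply_eq_of_tendsto_inner [CompleteSpace H] {C : Set H} (hcl : IsClosed C)
    (hconv : Convex ℝ C) {T : H → H} (hT : ∀ x ∈ C, ∀ y ∈ C, ‖T x - T y‖ ≤ ‖x - y‖)
    {y : ℕ → H} (hy : ∀ n, y n ∈ C) {M : ℝ} (hM : ∀ n, ‖y n‖ ≤ M) {w : H}
    (hw : ∀ e, Tendsto (fun n => ⟪y n, e⟫) atTop (𝓝 ⟪w, e⟫))
    (hreg : Tendsto (fun n => ‖y n - T (y n)‖) atTop (𝓝 0)) :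
    w ∈ C ∧ T w = w := by
  have hwC : w ∈ C := hcl.mem_of_tendsto_inner hconv hy hw
  refine ⟨hwC, ?_⟩
  set d := fun n => ‖y n - T (y n)‖
  -- Expand `‖y n - T w‖²` around `w` and compare with `‖y n - T w‖ ≤ d n + ‖y n - w‖`.
  have hbound : ∀ n, ‖w - T w‖ ^ 2 ≤ d n * (d n + 2 * (M + ‖w‖)) - 2 * ⟪y n - w, w - T w⟫ := by
    intro n
    have hexp := norm_add_sq_real (y n - w) (w - T w)
    rw [sub_add_sub_cancel] at hexp
    have htri : ‖y n - T w‖ ≤ d n + ‖y n - w‖ := by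
      calc ‖y n - T w‖ ≤ ‖y n - T (y n)‖ + ‖T (y n) - T w‖ :=
            norm_sub_le_norm_sub_add_norm_sub _ _ _
        _ ≤ d n + ‖y n - w‖ := add_le_add le_rfl (hT _ (hy n) _ hwC)
    have hyw : ‖y n - w‖ ≤ M + ‖w‖ := (norm_sub_le _ _).trans (by linarith [hM n])
    have hd : 0 ≤ d n := norm_nonneg _
    nlinarith [pow_le_pow_left₀ (norm_nonneg _) htri 2, norm_nonneg (y n - w)]
  have hinner : Tendsto (fun n => ⟪y n - w, w - T w⟫) atTop (𝓝 0) := by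
    simpa only [inner_sub_left, sub_self] using (hw (w - T w)).sub_const ⟪w, w - T w⟫
  have hlim : Tendsto (fun n => d n * (d n + 2 * (M + ‖w‖)) - 2 * ⟪y n - w, w - T w⟫)
      atTop (𝓝 0) := by
    simpa using (hreg.mul (hreg.add_const (2 * (M + ‖w‖)))).sub (hinner.const_mul 2)
  have hle : ‖w - T w‖ ^ 2 ≤ 0 := ge_of_tendsto' hlim hbound
  have : w - T w = 0 := by
    rw [← norm_eq_zero]
    nlinarith [norm_nonneg (w - T w)]
  exact (sub_eq_zero.mp this).symm

theorem eventually_inner_sub_le_of_forall_subseq [CompleteSpace H] {y : ℕ → H} {M : ℝ}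
    (hM : ∀ n, ‖y n‖ ≤ M) {S : Set H}
    (hS : ∀ (φ : ℕ → ℕ) (w : H), StrictMono φ →
      (∀ e, Tendsto (fun k => ⟪y (φ k), e⟫) atTop (𝓝 ⟪w, e⟫)) → w ∈ S)
    {d z : H} (hd : ∀ w ∈ S, ⟪d, w - z⟫ ≤ 0) :
    ∀ ε > 0, ∀ᶠ n in atTop, ⟪d, y n - z⟫ ≤ ε := by
  intro ε hε
  by_contra h
  obtain ⟨ψ, hψ, hlt⟩ := extraction_of_frequently_atTop ((not_eventually.mp h).mono
    fun n hn => lt_of_not_ge hn)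
  obtain ⟨w, φ, hφ, hw⟩ := exists_strictMono_tendsto_inner fun k => hM (ψ k)
  have hlim : Tendsto (fun k => ⟪d, y (ψ (φ k)) - z⟫) atTop (𝓝 ⟪d, w - z⟫) := by
    simpa only [inner_sub_right, real_inner_comm d] using (hw d).sub_const ⟪d, z⟫
  linarith [hd w (hS (ψ ∘ φ) w (hψ.comp hφ) hw), ge_of_tendsto' hlim fun k => (hlt (φ k)).le]

theorem eventually_inner_sub_le_of_tendsto_norm_sub_apply [CompleteSpace H] {C : Set H}
    (hcl : IsClosed C) (hconv : Convex ℝ C) {T U : H → H}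
    (hT : ∀ x ∈ C, ∀ y ∈ C, ‖T x - T y‖ ≤ ‖x - y‖) (hU : ∀ x ∈ C, ∀ y ∈ C, ‖U x - U y‖ ≤ ‖x - y‖)
    {y : ℕ → H} (hy : ∀ n, y n ∈ C) {M : ℝ} (hM : ∀ n, ‖y n‖ ≤ M)
    (hyT : Tendsto (fun n => ‖y n - T (y n)‖) atTop (𝓝 0))
    (hyU : Tendsto (fun n => ‖y n - U (y n)‖) atTop (𝓝 0)) {d z : H}
    (hd : ∀ w ∈ C ∩ (Function.fixedPoints T ∩ Function.fixedPoints U), ⟪d, w - z⟫ ≤ 0) :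
    ∀ ε > 0, ∀ᶠ n in atTop, ⟪d, y n - z⟫ ≤ ε := by
  refine eventually_inner_sub_le_of_forall_subseq hM (fun φ w hφ hw => ?_) hd
  obtain ⟨hwC, hwT⟩ := apply_eq_of_tendsto_inner hcl hconv hT (fun k => hy _) (fun k => hM _) hw
    (hyT.comp hφ.tendsto_atTop)
  exact ⟨hwC, hwT, (apply_eq_of_tendsto_inner hcl hconv hU (fun k => hy _) (fun k => hM _) hw
    (hyU.comp hφ.tendsto_atTop)).2⟩

end InnerProductSpace

namespace HalpernMann

variable {H : Type*} [NormedAddCommGroup H] [InnerProductSpace ℝ H]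
  {T U : H → H} {u : H} {α β : ℕ → ℝ} {y v : ℕ → H}

theorem mem {C : Set H} (hconv : Convex ℝ C) (hTC : Set.MapsTo T C C) (hUC : Set.MapsTo U C C)
    (hu : u ∈ C) (hα : ∀ n, α n ∈ Set.Icc (0 : ℝ) 1) (hβ : ∀ n, β n ∈ Set.Icc (0 : ℝ) 1)
    (hv : ∀ n, v n = (1 - α n) • T (y n) + α n • u)
    (hy : ∀ n, y (n + 1) = (1 - β n) • U (v n) + β n • v n) (hy0 : y 0 ∈ C) (n : ℕ) :
    y n ∈ C ∧ v n ∈ C := by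
  have hvC : ∀ n, y n ∈ C → v n ∈ C := fun n h => by
    rw [hv n]
    exact hconv (hTC h) hu (by linarith [(hα n).2]) (hα n).1 (by ring)
  induction n with
  | zero => exact ⟨hy0, hvC 0 hy0⟩
  | succ n ih =>
    have hyC : y (n + 1) ∈ C := by
      rw [hy n]
      exact hconv (hUC ih.2) ih.2 (by linarith [(hβ n).2]) (hβ n).1 (by ring)
    exact ⟨hyC, hvC _ hyC⟩

theorem norm_odd_sub_le {p : H} (hα : ∀ n, α n ∈ Set.Icc (0 : ℝ) 1)
    (hv : ∀ n, v n = (1 - α n) • T (y n) + α n • u)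
    (hTp : ∀ n, ‖T (y n) - p‖ ≤ ‖y n - p‖) (n : ℕ) :
    ‖v n - p‖ ≤ (1 - α n) * ‖y n - p‖ + α n * ‖u - p‖ := by
  rw [hv n]
  refine (norm_combo_sub_le (hα n) _ _ _).trans ?_
  gcongr
  · linarith [(hα n).2]
  · exact hTp n

theorem norm_even_sub_le {p : H} (hβ : ∀ n, β n ∈ Set.Icc (0 : ℝ) 1)
    (hy : ∀ n, y (n + 1) = (1 - β n) • U (v n) + β n • v n)
    (hUp : ∀ n, ‖U (v n) - p‖ ≤ ‖v n - p‖) (n : ℕ) :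
    ‖y (n + 1) - p‖ ≤ ‖v n - p‖ := by
  rw [hy n]
  refine (norm_combo_sub_le (hβ n) _ _ _).trans ?_
  nlinarith [hUp n, (hβ n).1, (hβ n).2]

theorem norm_iterate_sub_le {p : H} {M : ℝ} (hα : ∀ n, α n ∈ Set.Icc (0 : ℝ) 1)
    (hβ : ∀ n, β n ∈ Set.Icc (0 : ℝ) 1) (hv : ∀ n, v n = (1 - α n) • T (y n) + α n • u)
    (hy : ∀ n, y (n + 1) = (1 - β n) • U (v n) + β n • v n)
    (hTp : ∀ n, ‖T (y n) - p‖ ≤ ‖y n - p‖) (hUp : ∀ n, ‖U (v n) - p‖ ≤ ‖v n - p‖)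
    (hy0 : ‖y 0 - p‖ ≤ M) (hu : ‖u - p‖ ≤ M) (n : ℕ) :
    ‖y n - p‖ ≤ M ∧ ‖v n - p‖ ≤ M := by
  have hvM : ∀ n, ‖y n - p‖ ≤ M → ‖v n - p‖ ≤ M := fun n h => by
    nlinarith [norm_odd_sub_le hα hv hTp n, (hα n).1, (hα n).2]
  induction n with
  | zero => exact ⟨hy0, hvM 0 hy0⟩
  | succ n ih =>
    have hyM := (norm_even_sub_le hβ hy hUp n).trans ih.2
    exact ⟨hyM, hvM _ hyM⟩

theorem tendsto_norm_succ_sub {K : ℝ} (hα : ∀ n, α n ∈ Set.Icc (0 : ℝ) 1)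
    (hβ : ∀ n, β n ∈ Set.Icc (0 : ℝ) 1) (hv : ∀ n, v n = (1 - α n) • T (y n) + α n • u)
    (hy : ∀ n, y (n + 1) = (1 - β n) • U (v n) + β n • v n)
    (hT : ∀ n, ‖T (y (n + 1)) - T (y n)‖ ≤ ‖y (n + 1) - y n‖)
    (hU : ∀ n, ‖U (v (n + 1)) - U (v n)‖ ≤ ‖v (n + 1) - v n‖)
    (huT : ∀ n, ‖u - T (y n)‖ ≤ K) (hvU : ∀ n, ‖v n - U (v n)‖ ≤ K)
    (hdiv : Tendsto (fun n => ∑ i ∈ Finset.range n, α i) atTop atTop)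
    (hαs : Summable fun n => |α (n + 1) - α n|) (hβs : Summable fun n => |β (n + 1) - β n|) :
    Tendsto (fun n => ‖y (n + 1) - y n‖) atTop (𝓝 0) := by
  have hK : 0 ≤ K := (norm_nonneg _).trans (huT 0)
  have hvstep : ∀ n, ‖v (n + 1) - v n‖ ≤
      (1 - α (n + 1)) * ‖y (n + 1) - y n‖ + |α (n + 1) - α n| * K := by
    intro n
    have h := norm_combo_sub_combo_le (s := α n) (hα (n + 1)) (T (y n)) u (T (y (n + 1))) u
    rw [sub_self, norm_zero, mul_zero, add_zero, ← hv, ← hv] at h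
    refine h.trans ?_
    gcongr
    · linarith [(hα (n + 1)).2]
    · exact hT n
    · exact huT n
  have hystep : ∀ n, ‖y (n + 1 + 1) - y (n + 1)‖ ≤
      ‖v (n + 1) - v n‖ + |β (n + 1) - β n| * K := by
    intro n
    have h := norm_combo_sub_combo_le (s := β n) (hβ (n + 1)) (U (v n)) (v n)
      (U (v (n + 1))) (v (n + 1))
    rw [← hy, ← hy] at h
    refine h.trans ?_
    have := mul_le_mul_of_nonneg_left (hU n) (sub_nonneg.2 (hβ (n + 1)).2)
    have := mul_le_mul_of_nonneg_left (hvU n) (abs_nonneg (β (n + 1) - β n))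
    linarith
  refine tendsto_zero_of_le_one_sub_mul_add_mul_add (t := fun n => α (n + 1)) (b := 0)
    (c := fun n => K * (|α (n + 1) - α n| + |β (n + 1) - β n|)) (fun n => norm_nonneg _)
    (fun n => hα (n + 1)) (fun n => by positivity) (fun n => ?_)
    (tendsto_sum_range_nat_add_atTop hdiv 1) (fun ε hε => .of_forall fun _ => hε.le)
    ((hαs.add hβs).mul_left K)
  simp only [Pi.zero_apply, mul_zero, add_zero]
  linarith [hvstep n, hystep n]

theorem tendsto_norm_sub_apply_of_tendsto_norm_succ_sub {p : H} {M c : ℝ}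
    (hα : ∀ n, α n ∈ Set.Icc (0 : ℝ) 1) (hβ : ∀ n, β n ∈ Set.Icc (0 : ℝ) 1)
    (hv : ∀ n, v n = (1 - α n) • T (y n) + α n • u)
    (hy : ∀ n, y (n + 1) = (1 - β n) • U (v n) + β n • v n)
    (hTp : ∀ n, ‖T (y n) - p‖ ≤ ‖y n - p‖) (hUp : ∀ n, ‖U (v n) - p‖ ≤ ‖v n - p‖)
    (hM : ∀ n, ‖y n - p‖ ≤ M) (hα0 : Tendsto α atTop (𝓝 0)) (hc : 0 < c)
    (hβc : ∀ᶠ n in atTop, c ≤ β n * (1 - β n))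
    (hreg : Tendsto (fun n => ‖y (n + 1) - y n‖) atTop (𝓝 0)) :
    Tendsto (fun n => ‖v n - U (v n)‖) atTop (𝓝 0) := by
  have hmann : ∀ n, β n * (1 - β n) * ‖U (v n) - v n‖ ^ 2 ≤
      ‖v n - p‖ ^ 2 - ‖y (n + 1) - p‖ ^ 2 := by
    intro n
    have h := norm_combo_sq (β n) (U (v n) - p) (v n - p)
    rw [show (1 - β n) • (U (v n) - p) + β n • (v n - p) = y (n + 1) - p by rw [hy]; module,
      sub_sub_sub_cancel_right] at h
    have := pow_le_pow_left₀ (norm_nonneg _) (hUp n) 2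
    nlinarith [(hβ n).1, (hβ n).2]
  have hhalpern : ∀ n, ‖v n - p‖ ^ 2 ≤ ‖y n - p‖ ^ 2 + α n * ‖u - p‖ ^ 2 := by
    intro n
    have := pow_le_pow_left₀ (norm_nonneg _) (norm_odd_sub_le hα hv hTp n) 2
    obtain ⟨h0, h1⟩ := hα n
    nlinarith [sq_nonneg (‖y n - p‖ - ‖u - p‖), mul_nonneg h0 (sub_nonneg.2 h1),
      mul_nonneg h0 (sq_nonneg ‖y n - p‖)]
  have hdiff : Tendsto (fun n => ‖y n - p‖ ^ 2 - ‖y (n + 1) - p‖ ^ 2) atTop (𝓝 0) := by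
    refine squeeze_zero_norm (fun n => ?_) (by simpa using hreg.mul_const (2 * M))
    have h := abs_norm_sub_norm_le (y n - p) (y (n + 1) - p)
    rw [sub_sub_sub_cancel_right, norm_sub_rev (y n) (y (n + 1))] at h
    rw [sq_sub_sq, Real.norm_eq_abs, abs_mul, mul_comm,
      abs_of_nonneg (add_nonneg (norm_nonneg _) (norm_nonneg _))]
    exact mul_le_mul h (by linarith [hM n, hM (n + 1)]) (by positivity) (norm_nonneg _)
  have hsq : Tendsto (fun n => ‖U (v n) - v n‖ ^ 2) atTop (𝓝 0) := by
    have hup : Tendsto (fun n => (‖y n - p‖ ^ 2 - ‖y (n + 1) - p‖ ^ 2 + α n * ‖u - p‖ ^ 2) / c)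
        atTop (𝓝 0) := by
      simpa using (hdiff.add (hα0.mul_const _)).div_const c
    refine squeeze_zero' (.of_forall fun n => sq_nonneg _) ?_ hup
    filter_upwards [hβc] with n hn
    rw [le_div_iff₀ hc]
    nlinarith [hmann n, hhalpern n, sq_nonneg ‖U (v n) - v n‖]
  simpa [Real.sqrt_sq (norm_nonneg _), norm_sub_rev (v _)] using hsq.sqrt

theorem tendsto_norm_sub_apply {C : Set H} {p : H} {M c : ℝ}
    (hT : ∀ x ∈ C, ∀ y ∈ C, ‖T x - T y‖ ≤ ‖x - y‖) (hU : ∀ x ∈ C, ∀ y ∈ C, ‖U x - U y‖ ≤ ‖x - y‖)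
    (hyC : ∀ n, y n ∈ C) (hvC : ∀ n, v n ∈ C)
    (hTp : ∀ n, ‖T (y n) - p‖ ≤ ‖y n - p‖) (hUp : ∀ n, ‖U (v n) - p‖ ≤ ‖v n - p‖)
    (hM : ∀ n, ‖y n - p‖ ≤ M ∧ ‖v n - p‖ ≤ M) (hu : ‖u - p‖ ≤ M)
    (hα : ∀ n, α n ∈ Set.Icc (0 : ℝ) 1) (hβ : ∀ n, β n ∈ Set.Icc (0 : ℝ) 1)
    (hv : ∀ n, v n = (1 - α n) • T (y n) + α n • u)
    (hy : ∀ n, y (n + 1) = (1 - β n) • U (v n) + β n • v n) (hα0 : Tendsto α atTop (𝓝 0))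
    (hdiv : Tendsto (fun n => ∑ i ∈ Finset.range n, α i) atTop atTop)
    (hαs : Summable fun n => |α (n + 1) - α n|) (hβs : Summable fun n => |β (n + 1) - β n|)
    (hc : 0 < c) (hβc : ∀ᶠ n in atTop, c ≤ β n * (1 - β n)) :
    Tendsto (fun n => ‖v n - T (v n)‖) atTop (𝓝 0) ∧
      Tendsto (fun n => ‖v n - U (v n)‖) atTop (𝓝 0) := by
  have huT : ∀ n, ‖u - T (y n)‖ ≤ 2 * M := fun n => by
    linarith [norm_sub_le_norm_sub_add_norm_sub u p (T (y n)), norm_sub_rev p (T (y n)), hTp n,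
      (hM n).1]
  have hvU : ∀ n, ‖v n - U (v n)‖ ≤ 2 * M := fun n => by
    linarith [norm_sub_le_norm_sub_add_norm_sub (v n) p (U (v n)), norm_sub_rev p (U (v n)),
      hUp n, (hM n).2]
  have hreg := tendsto_norm_succ_sub hα hβ hv hy (fun n => hT _ (hyC _) _ (hyC n))
    (fun n => hU _ (hvC _) _ (hvC n)) huT hvU hdiv hαs hβs
  have hvU' := tendsto_norm_sub_apply_of_tendsto_norm_succ_sub hα hβ hv hy hTp hUp
    (fun n => (hM n).1) hα0 hc hβc hreg
  have hvTy : Tendsto (fun n => ‖v n - T (y n)‖) atTop (𝓝 0) := by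
    refine squeeze_zero (fun n => norm_nonneg _) (fun n => ?_)
      (by simpa using hα0.mul_const (2 * M))
    rw [show v n - T (y n) = α n • (u - T (y n)) by rw [hv]; module,
      norm_smul_of_nonneg (hα n).1]
    exact mul_le_mul_of_nonneg_left (huT n) (hα n).1
  have hyv : Tendsto (fun n => ‖y n - v n‖) atTop (𝓝 0) := by
    refine squeeze_zero (fun n => norm_nonneg _) (fun n => ?_) (by simpa using hreg.add hvU')
    calc ‖y n - v n‖ ≤ ‖y n - y (n + 1)‖ + ‖y (n + 1) - v n‖ :=
          norm_sub_le_norm_sub_add_norm_sub _ _ _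
      _ ≤ ‖y (n + 1) - y n‖ + ‖v n - U (v n)‖ := by
        rw [norm_sub_rev (y n), show y (n + 1) - v n = (β n - 1) • (v n - U (v n)) by
          rw [hy]; module, norm_smul, Real.norm_eq_abs, abs_of_nonpos (by linarith [(hβ n).2])]
        gcongr
        exact mul_le_of_le_one_left (norm_nonneg _) (by linarith [(hβ n).1])
  refine ⟨squeeze_zero (fun n => norm_nonneg _) (fun n => ?_) (by simpa using hvTy.add hyv), hvU'⟩
  calc ‖v n - T (v n)‖ ≤ ‖v n - T (y n)‖ + ‖T (y n) - T (v n)‖ :=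
        norm_sub_le_norm_sub_add_norm_sub _ _ _
    _ ≤ ‖v n - T (y n)‖ + ‖y n - v n‖ := by gcongr; exact hT _ (hyC n) _ (hvC n)

theorem norm_succ_sub_sq_le {z : H} (hα : ∀ n, α n ∈ Set.Icc (0 : ℝ) 1)
    (hβ : ∀ n, β n ∈ Set.Icc (0 : ℝ) 1) (hv : ∀ n, v n = (1 - α n) • T (y n) + α n • u)
    (hy : ∀ n, y (n + 1) = (1 - β n) • U (v n) + β n • v n)
    (hTz : ∀ n, ‖T (y n) - z‖ ≤ ‖y n - z‖) (hUz : ∀ n, ‖U (v n) - z‖ ≤ ‖v n - z‖) (n : ℕ) :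
    ‖y (n + 1) - z‖ ^ 2 ≤ (1 - α n) * ‖y n - z‖ ^ 2 + α n * (2 * ⟪u - z, v n - z⟫) := by
  obtain ⟨h0, h1⟩ := hα n
  have hvz : v n - z = (1 - α n) • (T (y n) - z) + α n • (u - z) := by rw [hv]; module
  have key := norm_add_sq_le_norm_sq_add_inner ((1 - α n) • (T (y n) - z)) (α n • (u - z))
  rw [← hvz, norm_smul_of_nonneg (by linarith), real_inner_smul_left] at key
  have hTz2 := pow_le_pow_left₀ (norm_nonneg _) (hTz n) 2
  have hyz2 := pow_le_pow_left₀ (norm_nonneg _) (norm_even_sub_le hβ hy hUz n) 2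
  nlinarith [mul_le_mul_of_nonneg_left hTz2 (mul_nonneg (sub_nonneg.2 h1) (sub_nonneg.2 h1)),
    mul_nonneg h0 (sq_nonneg ‖y n - z‖)]

theorem tendsto_of_eventually_inner_le {z : H} (hα : ∀ n, α n ∈ Set.Icc (0 : ℝ) 1)
    (hβ : ∀ n, β n ∈ Set.Icc (0 : ℝ) 1) (hv : ∀ n, v n = (1 - α n) • T (y n) + α n • u)
    (hy : ∀ n, y (n + 1) = (1 - β n) • U (v n) + β n • v n)
    (hTz : ∀ n, ‖T (y n) - z‖ ≤ ‖y n - z‖) (hUz : ∀ n, ‖U (v n) - z‖ ≤ ‖v n - z‖)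
    (hα0 : Tendsto α atTop (𝓝 0)) (hdiv : Tendsto (fun n => ∑ i ∈ Finset.range n, α i) atTop atTop)
    (hlim : ∀ ε > 0, ∀ᶠ n in atTop, ⟪u - z, v n - z⟫ ≤ ε) :
    Tendsto y atTop (𝓝 z) ∧ Tendsto v atTop (𝓝 z) := by
  have hsq : Tendsto (fun n => ‖y n - z‖ ^ 2) atTop (𝓝 0) :=
    tendsto_zero_of_le_one_sub_mul_add_mul (fun n => sq_nonneg _) hα
      (norm_succ_sub_sq_le hα hβ hv hy hTz hUz) hdiv
      (fun ε hε => (hlim (ε / 2) (half_pos hε)).mono fun n hn => by linarith)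
  have hyz : Tendsto (fun n => ‖y n - z‖) atTop (𝓝 0) := by
    simpa [Real.sqrt_sq (norm_nonneg _)] using hsq.sqrt
  refine ⟨tendsto_iff_norm_sub_tendsto_zero.2 hyz, tendsto_iff_norm_sub_tendsto_zero.2 ?_⟩
  refine squeeze_zero (fun n => norm_nonneg _) (fun n => (norm_odd_sub_le hα hv hTz n).trans ?_)
    (by simpa using hyz.add (hα0.mul_const ‖u - z‖))
  nlinarith [(hα n).1, norm_nonneg (y n - z)]

end HalpernMann

theorem stmt16_general {H : Type*} [NormedAddCommGroup H] [InnerProductSpace ℝ H]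
    [CompleteSpace H]
    (C : Set H) (hCclosed : IsClosed C) (hCconv : Convex ℝ C)
    (T U : H → H) (hTmaps : Set.MapsTo T C C) (hUmaps : Set.MapsTo U C C)
    (hTne : ∀ x ∈ C, ∀ y ∈ C, ‖T x - T y‖ ≤ ‖x - y‖)
    (hUne : ∀ x ∈ C, ∀ y ∈ C, ‖U x - U y‖ ≤ ‖x - y‖)
    (hF : ∃ q ∈ C, T q = q ∧ U q = q)
    (u x₀ : H) (hu : u ∈ C) (hx₀ : x₀ ∈ C)
    (α β : ℕ → ℝ)
    (hα : ∀ n, α n ∈ Set.Icc (0 : ℝ) 1) (hβ : ∀ n, β n ∈ Set.Ioo (0 : ℝ) 1)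
    (h1 : Tendsto α atTop (nhds 0))
    (h2 : Tendsto (fun n => ∑ i ∈ Finset.range n, α i) atTop atTop)
    (h3 : Summable (fun n => |α (n + 1) - α n|))
    (h4 : Summable (fun n => |β (n + 1) - β n|))
    (h5 : 0 < Filter.liminf β Filter.atTop)
    (h6 : Filter.limsup β Filter.atTop < 1)
    (x : ℕ → H) (hx0 : x 0 = x₀)
    (hxodd : ∀ n, x (2 * n + 1) = (1 - α n) • T (x (2 * n)) + α n • u)
    (hxeven : ∀ n, x (2 * n + 2) = (1 - β n) • U (x (2 * n + 1)) + β n • x (2 * n + 1)) :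
    ∃ z, (z ∈ C ∧ T z = z ∧ U z = z) ∧
      (∀ y, (y ∈ C ∧ T y = y ∧ U y = y) → ‖u - z‖ ≤ ‖u - y‖) ∧
      Tendsto x atTop (nhds z) := by
  obtain ⟨p, hpF⟩ := hF
  set y : ℕ → H := fun n => x (2 * n)
  set v : ℕ → H := fun n => x (2 * n + 1)
  have hv : ∀ n, v n = (1 - α n) • T (y n) + α n • u := hxodd
  have hy : ∀ n, y (n + 1) = (1 - β n) • U (v n) + β n • v n := hxeven
  have hβ' : ∀ n, β n ∈ Set.Icc (0 : ℝ) 1 := fun n => Set.Ioo_subset_Icc_self (hβ n)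
  have hC := HalpernMann.mem hCconv hTmaps hUmaps hu hα hβ' hv hy (hx0 ▸ hx₀ : x 0 ∈ C)
  have hquasi : ∀ q ∈ C ∩ (Function.fixedPoints T ∩ Function.fixedPoints U),
      (∀ n, ‖T (y n) - q‖ ≤ ‖y n - q‖) ∧ ∀ n, ‖U (v n) - q‖ ≤ ‖v n - q‖ :=
    fun q ⟨hqC, hqT, hqU⟩ => ⟨fun n => by simpa only [hqT.eq] using hTne _ (hC n).1 q hqC,
      fun n => by simpa only [hqU.eq] using hUne _ (hC n).2 q hqC⟩
  obtain ⟨hTp, hUp⟩ := hquasi p hpF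
  set M := max ‖y 0 - p‖ ‖u - p‖
  have hM := HalpernMann.norm_iterate_sub_le hα hβ' hv hy hTp hUp (le_max_left _ _)
    (le_max_right _ _)
  obtain ⟨c, hc, hβc⟩ := exists_pos_eventually_le_mul_one_sub hβ' h5 h6
  obtain ⟨hvT, hvU⟩ := HalpernMann.tendsto_norm_sub_apply hTne hUne (fun n => (hC n).1)
    (fun n => (hC n).2) hTp hUp hM (le_max_right _ _) hα hβ' hv hy h1 h2 h3 h4 hc hβc
  have hFcl : IsClosed (C ∩ (Function.fixedPoints T ∩ Function.fixedPoints U)) := by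
    rw [Set.inter_inter_distrib_left]
    exact (isClosed_inter_fixedPoints hCclosed hTne).inter
      (isClosed_inter_fixedPoints hCclosed hUne)
  have hFconv : Convex ℝ (C ∩ (Function.fixedPoints T ∩ Function.fixedPoints U)) := by
    rw [Set.inter_inter_distrib_left]
    exact (convex_inter_fixedPoints hCconv hTne).inter (convex_inter_fixedPoints hCconv hUne)
  obtain ⟨z, hzF, hz⟩ := exists_mem_forall_inner_sub_nonpos ⟨p, hpF⟩ hFcl hFconv u
  have hvb : ∀ n, ‖v n‖ ≤ M + ‖p‖ := fun n => by linarith [norm_le_norm_sub_add (v n) p, (hM n).2]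
  have hlim := eventually_inner_sub_le_of_tendsto_norm_sub_apply hCclosed hCconv hTne hUne
    (fun n => (hC n).2) hvb hvT hvU hz
  obtain ⟨hyz, hvz⟩ := HalpernMann.tendsto_of_eventually_inner_le hα hβ' hv hy (hquasi z hzF).1
    (hquasi z hzF).2 h1 h2 hlim
  exact ⟨z, hzF, fun q hq => norm_sub_le_norm_sub_of_inner_sub_nonpos (hz q hq),
    tendsto_of_tendsto_even_odd hyz hvz⟩

/-- Main theorem (Hilbert-space instance): under conditions (i)–(v) on the
parameter sequences, the alternating Halpern–Mann iteration converges strongly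
to the metric projection of the anchor point `u` onto
`F = Fix(T) ∩ Fix(U)`. -/
theorem stmt16 {H : Type*} [NormedAddCommGroup H] [InnerProductSpace ℝ H]
    [CompleteSpace H]
    (C : Set H) (hCne : C.Nonempty) (hCclosed : IsClosed C) (hCconv : Convex ℝ C)
    (T U : H → H) (hTmaps : Set.MapsTo T C C) (hUmaps : Set.MapsTo U C C)
    (hTne : ∀ x ∈ C, ∀ y ∈ C, ‖T x - T y‖ ≤ ‖x - y‖)
    (hUne : ∀ x ∈ C, ∀ y ∈ C, ‖U x - U y‖ ≤ ‖x - y‖)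
    (hF : ∃ q ∈ C, T q = q ∧ U q = q)
    (u x₀ : H) (hu : u ∈ C) (hx₀ : x₀ ∈ C)
    (α β : ℕ → ℝ)
    (hα : ∀ n, α n ∈ Set.Icc (0 : ℝ) 1) (hβ : ∀ n, β n ∈ Set.Ioo (0 : ℝ) 1)
    (h1 : Tendsto α atTop (nhds 0))
    (h2 : Tendsto (fun n => ∑ i ∈ Finset.range n, α i) atTop atTop)
    (h3 : Summable (fun n => |α (n + 1) - α n|))
    (h4 : Summable (fun n => |β (n + 1) - β n|))
    (h5 : 0 < Filter.liminf β Filter.atTop)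
    (h6 : Filter.limsup β Filter.atTop < 1)
    (x : ℕ → H) (hx0 : x 0 = x₀)
    (hxodd : ∀ n, x (2 * n + 1) = (1 - α n) • T (x (2 * n)) + α n • u)
    (hxeven : ∀ n, x (2 * n + 2) = (1 - β n) • U (x (2 * n + 1)) + β n • x (2 * n + 1)) :
    ∃ z, (z ∈ C ∧ T z = z ∧ U z = z) ∧
      (∀ y, (y ∈ C ∧ T y = y ∧ U y = y) → ‖u - z‖ ≤ ‖u - y‖) ∧
      Tendsto x atTop (nhds z) :=
  stmt16_general C hCclosed hCconv T U hTmaps hUmaps hTne hUne hF u x₀ hu hx₀ α β hα hβ h1 h2 h3 h4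
    h5 h6 x hx0 hxodd hxeven
end

section
/- Let H be a real Hilbert space, C ⊆ H a nonempty convex subset, T : C → C a nonexpansive map with a fixed point p, (α_n) ⊂ [0,1], and y₀, u ∈ C. Let (y_n) be the Halpern iteration y_{n+1} = (1 − α_n)·T(y_n) + α_n·u with y_0 = y₀. Assume Γ1 is a rate of convergence for α_n → 0, Γ2 : ℕ → ℕ satisfies ∑_{i=0}^{Γ2(k)} α_i ≥ k for all k, and Γ3 is a Cauchy rate for ∑|α_{n+1} − α_n|. Let N ∈ ℕ, N ≥ 1, with N ≥ max{‖y₀ − p‖, 2‖u − p‖}. Then: (a) for all ε > 0 and all n ≥ θ(ε), ‖y_{n+1} − y_n‖ ≤ ε, where θ(ε) := A(V(ε/2) + ⌈ln(4N/ε)⌉ + 1) + 1 with A(k) := Γ2(k+1) and V(ε) := Γ3(2ε/(3N)); and (b) for all ε > 0 and all n ≥ ρ̃(ε), ‖T(y_n) − y_n‖ ≤ ε, where ρ̃(ε) := max{ θ(ε/2), Γ1(ε/(3N)) }. -/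
/-!
The orbit stays in the closed ball of radius `N` about the fixed point `p`, so `‖u - T yₙ‖ ≤ 3N/2`
and the differences `bₙ = ‖yₙ₊₁ - yₙ‖` satisfy
`bₙ₊₁ ≤ (1 - αₙ₊₁) bₙ + (3N/2) |αₙ₊₁ - αₙ|`.
Unrolling this from `m = V + 1` with `1 - a ≤ exp (-a)` gives
`bₙ ≤ exp (-∑_{m ≤ i < n} αᵢ₊₁) · 2N + (3N/2) ∑_{m ≤ i < n} |αᵢ₊₁ - αᵢ|`:
the divergence rate `Γ2` makes the first term at most `ε/2`, the Cauchy rate `Γ3` the second.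
Finally `‖T yₙ - yₙ‖ ≤ αₙ ‖u - T yₙ‖ + bₙ`, and `Γ1` controls `αₙ`.
-/

/-- `θ(ε) := A(V(ε/2) + ⌈ln(4N/ε)⌉ + 1) + 1`, with `A(k) := Γ2(k+1)` and
`V(ε) := Γ3(2ε/(3N))`. -/
noncomputable def thetaH (Γ2 : ℕ → ℕ) (Γ3 : ℝ → ℕ) (N : ℕ) (ε : ℝ) : ℕ :=
  Γ2 (Γ3 (2 * (ε / 2) / (3 * (N : ℝ))) + ⌈Real.log (4 * (N : ℝ) / ε)⌉₊ + 1 + 1) + 1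

/-- `ρ̃(ε) := max{θ(ε/2), Γ1(ε/(3N))}`. -/
noncomputable def rhoH (Γ1 : ℝ → ℕ) (Γ2 : ℕ → ℕ) (Γ3 : ℝ → ℕ) (N : ℕ) (ε : ℝ) : ℕ :=
  max (thetaH Γ2 Γ3 N (ε / 2)) (Γ1 (ε / (3 * (N : ℝ))))

open Finset Real

theorem le_exp_neg_sum_mul_add_sum {a b c : ℕ → ℝ} (ha : ∀ n, 0 ≤ a n) (hb : ∀ n, 0 ≤ b n)
    (hc : ∀ n, 0 ≤ c n) (hrec : ∀ n, b (n + 1) ≤ (1 - a n) * b n + c n) {m n : ℕ}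
    (hmn : m ≤ n) :
    b n ≤ exp (-∑ i ∈ Ico m n, a i) * b m + ∑ i ∈ Ico m n, c i := by
  induction n, hmn using Nat.le_induction with
  | base => simp
  | succ n hmn ih =>
    set E := exp (-∑ i ∈ Ico m n, a i) * b m
    set S := ∑ i ∈ Ico m n, c i
    have hdecay : 1 - a n ≤ exp (-a n) := by linarith [add_one_le_exp (-a n)]
    have hcontr : exp (-a n) ≤ 1 := exp_le_one_iff.2 (by linarith [ha n])
    have hS : 0 ≤ S := sum_nonneg fun i _ => hc i
    rw [sum_Ico_succ_top hmn, sum_Ico_succ_top hmn, neg_add, exp_add]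
    calc b (n + 1) ≤ (1 - a n) * b n + c n := hrec n
      _ ≤ exp (-a n) * (E + S) + c n := by
        gcongr
        exact hb n
      _ ≤ exp (-∑ i ∈ Ico m n, a i) * exp (-a n) * b m + (S + c n) := by
        nlinarith [exp_pos (-a n)]

theorem le_of_thetaH_le {α b : ℕ → ℝ} {Γ2 : ℕ → ℕ} {Γ3 : ℝ → ℕ} {N : ℕ}
    (hα : ∀ n, α n ∈ Set.Icc (0 : ℝ) 1)
    (hΓ2 : ∀ k : ℕ, (k : ℝ) ≤ ∑ i ∈ range (Γ2 k + 1), α i)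
    (hΓ3 : ∀ ε : ℝ, 0 < ε → ∀ n : ℕ,
      ∑ i ∈ Icc (Γ3 ε + 1) (Γ3 ε + n), |α (i + 1) - α i| ≤ ε)
    (hN : (0 : ℝ) < N) (hb : ∀ n, 0 ≤ b n) (hbN : ∀ n, b n ≤ 2 * N)
    (hrec : ∀ n, b (n + 1) ≤ (1 - α (n + 1)) * b n + 3 * N / 2 * |α (n + 1) - α n|)
    {ε : ℝ} (hε : 0 < ε) {n : ℕ} (hn : thetaH Γ2 Γ3 N ε ≤ n) : b n ≤ ε := by
  set ε' := 2 * (ε / 2) / (3 * (N : ℝ)) with hε'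
  set V := Γ3 ε'
  set L := ⌈log (4 * (N : ℝ) / ε)⌉₊
  have hn' : Γ2 (V + L + 1 + 1) + 1 ≤ n := hn
  have hsum_le : ∀ m, ∑ i ∈ range m, α i ≤ m := fun m => by
    simpa using sum_le_card_nsmul (range m) α 1 fun i _ => (hα i).2
  have hsum_ge : (V + L + 2 : ℝ) ≤ ∑ i ∈ range (n + 1), α i := by
    have hsub : range (Γ2 (V + L + 1 + 1) + 1) ⊆ range (n + 1) :=
      range_subset_range.2 (by omega)
    have := (hΓ2 (V + L + 1 + 1)).trans <|
      sum_le_sum_of_subset_of_nonneg hsub fun i _ _ => (hα i).1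
    push_cast at this
    linarith
  have hVn : V + 1 ≤ n := by
    have := hsum_ge.trans (hsum_le (n + 1))
    push_cast at this
    have : (V : ℝ) + 1 ≤ n := by linarith [(Nat.cast_nonneg L : (0 : ℝ) ≤ L)]
    exact_mod_cast this
  have hdecay : log (4 * N / ε) ≤ ∑ i ∈ Ico (V + 1) n, α (i + 1) := by
    rw [sum_Ico_add' α]
    have hsplit := sum_range_add_sum_Ico α (show V + 1 + 1 ≤ n + 1 by omega)
    have hhead := hsum_le (V + 1 + 1)
    push_cast at hhead
    linarith [Nat.le_ceil (log (4 * N / ε))]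
  have hvar : ∑ i ∈ Ico (V + 1) n, 3 * N / 2 * |α (i + 1) - α i| ≤ ε / 2 := by
    obtain ⟨k, rfl⟩ : ∃ k, n = V + k + 1 := ⟨n - (V + 1), by omega⟩
    rw [← mul_sum, Ico_add_one_right_eq_Icc]
    calc 3 * N / 2 * ∑ i ∈ Icc (V + 1) (V + k), |α (i + 1) - α i| ≤ 3 * N / 2 * ε' := by
          gcongr; exact hΓ3 ε' (by positivity) k
      _ = ε / 2 := by rw [hε']; field_simp
  have hexp : exp (-∑ i ∈ Ico (V + 1) n, α (i + 1)) ≤ ε / (4 * N) := by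
    calc exp (-∑ i ∈ Ico (V + 1) n, α (i + 1)) ≤ exp (-log (4 * N / ε)) := by gcongr
      _ = ε / (4 * N) := by rw [exp_neg, exp_log (by positivity), inv_div]
  calc b n ≤ exp (-∑ i ∈ Ico (V + 1) n, α (i + 1)) * b (V + 1)
        + ∑ i ∈ Ico (V + 1) n, 3 * N / 2 * |α (i + 1) - α i| :=
        le_exp_neg_sum_mul_add_sum (fun i => (hα (i + 1)).1) hb (fun i => by positivity) hrec hVn
    _ ≤ ε / (4 * N) * (2 * N) + ε / 2 := by gcongr; exacts [hb _, hbN _]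
    _ = ε := by field_simp; ring

section Halpern

variable {E : Type*} [NormedAddCommGroup E] [NormedSpace ℝ E] {T : E → E} {α : ℕ → ℝ}
  {u : E} {y : ℕ → E}

theorem halpern_mem {C : Set E} (hC : Convex ℝ C) (hT : Set.MapsTo T C C)
    (hα : ∀ n, α n ∈ Set.Icc (0 : ℝ) 1) (hu : u ∈ C)
    (hyrec : ∀ n, y (n + 1) = (1 - α n) • T (y n) + α n • u) (hy0 : y 0 ∈ C) (n : ℕ) :
    y n ∈ C := by
  induction n with
  | zero => exact hy0
  | succ n ih =>
    rw [hyrec]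
    exact hC (hT ih) hu (by linarith [(hα n).2]) (hα n).1 (by ring)

theorem halpern_norm_sub_le {p : E} {K : ℝ} (hα : ∀ n, α n ∈ Set.Icc (0 : ℝ) 1)
    (hyrec : ∀ n, y (n + 1) = (1 - α n) • T (y n) + α n • u)
    (hT : ∀ n, ‖T (y n) - p‖ ≤ ‖y n - p‖) (hu : ‖u - p‖ ≤ K) (hy0 : ‖y 0 - p‖ ≤ K) (n : ℕ) :
    ‖y n - p‖ ≤ K := by
  induction n with
  | zero => exact hy0
  | succ n ih =>
    rw [← mem_closedBall_iff_norm, hyrec]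
    exact convex_closedBall p K (mem_closedBall_iff_norm.2 ((hT n).trans ih))
      (mem_closedBall_iff_norm.2 hu) (by linarith [(hα n).2]) (hα n).1 (by ring)

theorem halpern_norm_sub_succ_le (hα : ∀ n, α n ∈ Set.Icc (0 : ℝ) 1)
    (hyrec : ∀ n, y (n + 1) = (1 - α n) • T (y n) + α n • u)
    (hT : ∀ n, ‖T (y (n + 1)) - T (y n)‖ ≤ ‖y (n + 1) - y n‖) (n : ℕ) :
    ‖y (n + 2) - y (n + 1)‖
      ≤ (1 - α (n + 1)) * ‖y (n + 1) - y n‖ + |α (n + 1) - α n| * ‖u - T (y n)‖ := by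
  have hdiff : y (n + 2) - y (n + 1)
      = (1 - α (n + 1)) • (T (y (n + 1)) - T (y n)) + (α (n + 1) - α n) • (u - T (y n)) := by
    rw [hyrec (n + 1), hyrec n]; module
  have hcoef : 0 ≤ 1 - α (n + 1) := by linarith [(hα (n + 1)).2]
  calc ‖y (n + 2) - y (n + 1)‖
      ≤ (1 - α (n + 1)) * ‖T (y (n + 1)) - T (y n)‖ + |α (n + 1) - α n| * ‖u - T (y n)‖ := by
        rw [hdiff]
        refine (norm_add_le _ _).trans_eq ?_
        rw [norm_smul, norm_smul, Real.norm_of_nonneg hcoef, Real.norm_eq_abs]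
    _ ≤ _ := by gcongr; exact hT n

theorem halpern_norm_sub_le_abs_mul_add (hyrec : ∀ n, y (n + 1) = (1 - α n) • T (y n) + α n • u)
    (n : ℕ) : ‖T (y n) - y n‖ ≤ |α n| * ‖u - T (y n)‖ + ‖y (n + 1) - y n‖ := by
  have hstep : y (n + 1) - T (y n) = α n • (u - T (y n)) := by rw [hyrec]; module
  calc ‖T (y n) - y n‖ ≤ ‖T (y n) - y (n + 1)‖ + ‖y (n + 1) - y n‖ :=
        norm_sub_le_norm_sub_add_norm_sub _ _ _
    _ = |α n| * ‖u - T (y n)‖ + ‖y (n + 1) - y n‖ := by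
        rw [norm_sub_rev, hstep, norm_smul, Real.norm_eq_abs]

end Halpern

theorem stmt17_general {H : Type*} [NormedAddCommGroup H] [InnerProductSpace ℝ H]
    (C : Set H) (hCconv : Convex ℝ C)
    (T : H → H) (hTmaps : Set.MapsTo T C C)
    (hTne : ∀ x ∈ C, ∀ y ∈ C, ‖T x - T y‖ ≤ ‖x - y‖)
    (p : H) (hp : p ∈ C) (hTp : T p = p)
    (α : ℕ → ℝ) (hα : ∀ n, α n ∈ Set.Icc (0 : ℝ) 1)
    (y₀ u : H) (hy₀ : y₀ ∈ C) (hu : u ∈ C)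
    (y : ℕ → H) (hy0 : y 0 = y₀)
    (hyrec : ∀ n, y (n + 1) = (1 - α n) • T (y n) + α n • u)
    (Γ1 : ℝ → ℕ) (Γ2 : ℕ → ℕ) (Γ3 : ℝ → ℕ)
    (hΓ1 : ∀ ε : ℝ, 0 < ε → ∀ n ≥ Γ1 ε, |α n| ≤ ε)
    (hΓ2 : ∀ k : ℕ, (k : ℝ) ≤ ∑ i ∈ Finset.range (Γ2 k + 1), α i)
    (hΓ3 : ∀ ε : ℝ, 0 < ε → ∀ n : ℕ,
      ∑ i ∈ Finset.Icc (Γ3 ε + 1) (Γ3 ε + n), |α (i + 1) - α i| ≤ ε)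
    (N : ℕ) (hN1 : 1 ≤ N)
    (hN : max ‖y₀ - p‖ (2 * ‖u - p‖) ≤ (N : ℝ)) :
    ∀ ε : ℝ, 0 < ε →
      (∀ n ≥ thetaH Γ2 Γ3 N ε, ‖y (n + 1) - y n‖ ≤ ε) ∧
      (∀ n ≥ rhoH Γ1 Γ2 Γ3 N ε, ‖T (y n) - y n‖ ≤ ε) := by
  have hNpos : (0 : ℝ) < N := by exact_mod_cast hN1
  have hup : ‖u - p‖ ≤ N / 2 := by linarith [le_max_right ‖y₀ - p‖ (2 * ‖u - p‖)]
  have hmem := halpern_mem hCconv hTmaps hα hu hyrec (hy0 ▸ hy₀)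
  have hTy (n : ℕ) : ‖T (y n) - p‖ ≤ ‖y n - p‖ := by
    simpa only [hTp] using hTne _ (hmem n) _ hp
  have hbdd := halpern_norm_sub_le hα hyrec hTy (by linarith) (hy0 ▸ (le_max_left _ _).trans hN)
  have huT (n : ℕ) : ‖u - T (y n)‖ ≤ 3 * N / 2 := by
    linarith [norm_sub_le_norm_sub_add_norm_sub u p (T (y n)), norm_sub_rev p (T (y n)),
      hTy n, hbdd n]
  have hstep (ε : ℝ) (hε : 0 < ε) (n : ℕ) (hn : n ≥ thetaH Γ2 Γ3 N ε) :
      ‖y (n + 1) - y n‖ ≤ ε := by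
    refine le_of_thetaH_le (b := fun n => ‖y (n + 1) - y n‖) hα hΓ2 hΓ3 hNpos
      (fun _ => norm_nonneg _) (fun n => ?_) (fun n => ?_) hε hn
    · linarith [norm_sub_le_norm_sub_add_norm_sub (y (n + 1)) p (y n), norm_sub_rev p (y n),
        hbdd n, hbdd (n + 1)]
    · have := halpern_norm_sub_succ_le hα hyrec (fun n => hTne _ (hmem _) _ (hmem _)) n
      nlinarith [huT n, abs_nonneg (α (n + 1) - α n)]
  refine fun ε hε => ⟨hstep ε hε, fun n hn => ?_⟩
  have hαn : |α n| ≤ ε / (3 * N) := hΓ1 _ (by positivity) n (le_of_max_le_right hn)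
  calc ‖T (y n) - y n‖ ≤ |α n| * ‖u - T (y n)‖ + ‖y (n + 1) - y n‖ :=
        halpern_norm_sub_le_abs_mul_add hyrec n
    _ ≤ ε / (3 * N) * (3 * N / 2) + ε / 2 := by
        gcongr
        exacts [huT n, hstep _ (by positivity) n (le_of_max_le_left hn)]
    _ = ε := by field_simp; ring

/-- Rates of asymptotic regularity for the Halpern iteration in a Hilbert
space: `θ` for `‖y_{n+1} - y_n‖ → 0` and `ρ̃` for `‖T(y_n) - y_n‖ → 0`. -/
theorem stmt17 {H : Type*} [NormedAddCommGroup H] [InnerProductSpace ℝ H]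
    (C : Set H) (hCne : C.Nonempty) (hCconv : Convex ℝ C)
    (T : H → H) (hTmaps : Set.MapsTo T C C)
    (hTne : ∀ x ∈ C, ∀ y ∈ C, ‖T x - T y‖ ≤ ‖x - y‖)
    (p : H) (hp : p ∈ C) (hTp : T p = p)
    (α : ℕ → ℝ) (hα : ∀ n, α n ∈ Set.Icc (0 : ℝ) 1)
    (y₀ u : H) (hy₀ : y₀ ∈ C) (hu : u ∈ C)
    (y : ℕ → H) (hy0 : y 0 = y₀)
    (hyrec : ∀ n, y (n + 1) = (1 - α n) • T (y n) + α n • u)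
    (Γ1 : ℝ → ℕ) (Γ2 : ℕ → ℕ) (Γ3 : ℝ → ℕ)
    (hΓ1 : ∀ ε : ℝ, 0 < ε → ∀ n ≥ Γ1 ε, |α n| ≤ ε)
    (hΓ2 : ∀ k : ℕ, (k : ℝ) ≤ ∑ i ∈ Finset.range (Γ2 k + 1), α i)
    (hΓ3 : ∀ ε : ℝ, 0 < ε → ∀ n : ℕ,
      ∑ i ∈ Finset.Icc (Γ3 ε + 1) (Γ3 ε + n), |α (i + 1) - α i| ≤ ε)
    (N : ℕ) (hN1 : 1 ≤ N)
    (hN : max ‖y₀ - p‖ (2 * ‖u - p‖) ≤ (N : ℝ)) :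
    ∀ ε : ℝ, 0 < ε →
      (∀ n ≥ thetaH Γ2 Γ3 N ε, ‖y (n + 1) - y n‖ ≤ ε) ∧
      (∀ n ≥ rhoH Γ1 Γ2 Γ3 N ε, ‖T (y n) - y n‖ ≤ ε) :=
  stmt17_general C hCconv T hTmaps hTne p hp hTp α hα y₀ u hy₀ hu y hy0 hyrec Γ1 Γ2 Γ3 hΓ1 hΓ2 hΓ3 N
    hN1 hN
end

section
/- Let H be a real Hilbert space, C ⊆ H a nonempty convex subset, T, U : C → C nonexpansive maps, u, x₀ ∈ C, and (α_n), (β_n) ⊂ [0,1] with ∑ α_n = ∞. Let (x_n) be the alternating Halpern–Mann iteration with anchor u and starting point x₀, and let (x'_n) be a sequence in C with x'_0 = x₀ satisfying, for some nonnegative reals (δ_n): ‖x'_{2n+1} − ((1 − α_n)·T(x'_{2n}) + α_n·u)‖ ≤ δ_{2n} and ‖x'_{2n+2} − ((1 − β_n)·U(x'_{2n+1}) + β_n·x'_{2n+1})‖ ≤ δ_{2n+1} for all n ∈ ℕ. If ∑ δ_n < ∞, or if α_n > 0 for all n and lim (δ_{2n} + δ_{2n+1})/α_n = 0, then lim ‖x'_n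 − x_n‖ = 0. -/
/-!
Both iterations use the same maps, so the errors `aₙ = ‖x'_{2n} - x_{2n}‖` satisfy
`a_{n+1} ≤ (1 - αₙ) aₙ + δ_{2n} + δ_{2n+1}`: the Halpern step contracts by `1 - αₙ` and the
Mann step does not expand. Xu's lemma on such recursions (with `∑ αₙ = ∞`) gives `aₙ → 0`,
and the odd errors are at most `aₙ + δ_{2n}`.
-/

open Filter Finset Set Topology

lemma Finset.prod_one_sub_le_exp_neg_sum {ι : Type*} {α : ι → ℝ} (hα : ∀ i, α i ≤ 1)
    (s : Finset ι) : ∏ i ∈ s, (1 - α i) ≤ Real.exp (-∑ i ∈ s, α i) := by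
  rw [← Finset.sum_neg_distrib, Real.exp_sum]
  exact prod_le_prod (fun i _ => sub_nonneg.2 (hα i)) fun i _ => Real.one_sub_le_exp_neg (α i)

lemma Nat.tendsto_of_tendsto_even_of_tendsto_odd {X : Type*} {f : ℕ → X} {l : Filter X}
    (he : Tendsto (fun n => f (2 * n)) atTop l) (ho : Tendsto (fun n => f (2 * n + 1)) atTop l) :
    Tendsto f atTop l := by
  intro s hs
  obtain ⟨N, hN⟩ := eventually_atTop.1 (he.eventually_mem hs)
  obtain ⟨M, hM⟩ := eventually_atTop.1 (ho.eventually_mem hs)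
  refine eventually_atTop.2 ⟨2 * (N + M), fun n hn => ?_⟩
  obtain ⟨k, rfl | rfl⟩ := Nat.even_or_odd' n
  exacts [hN k (by omega), hM k (by omega)]

section XuLemma

variable {a α c : ℕ → ℝ}

lemma tendsto_prod_Ico_one_sub_atTop_zero (hα : ∀ n, α n ≤ 1)
    (hαdiv : Tendsto (fun n => ∑ i ∈ range n, α i) atTop atTop) (m : ℕ) :
    Tendsto (fun n => ∏ k ∈ Ico m n, (1 - α k)) atTop (𝓝 0) := by
  have hsum : Tendsto (fun n => ∑ k ∈ Ico m n, α k) atTop atTop := by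
    refine (tendsto_atTop_add_const_right _ (-∑ i ∈ range m, α i) hαdiv).congr' ?_
    filter_upwards [eventually_ge_atTop m] with n hn
    rw [sum_Ico_eq_sub _ hn, sub_eq_add_neg]
  exact squeeze_zero (fun n => prod_nonneg fun k _ => sub_nonneg.2 (hα k))
    (fun n => prod_one_sub_le_exp_neg_sum hα _)
    (Real.tendsto_exp_atBot.comp (tendsto_neg_atTop_atBot.comp hsum))

lemma le_mul_prod_Ico_add_sum_Ico (hα : ∀ n, α n ∈ Icc (0 : ℝ) 1) (hc : ∀ n, 0 ≤ c n) {m : ℕ}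
    (hrec : ∀ n ≥ m, a (n + 1) ≤ (1 - α n) * a n + c n) {n : ℕ} (hmn : m ≤ n) :
    a n ≤ a m * ∏ k ∈ Ico m n, (1 - α k) + ∑ k ∈ Ico m n, c k := by
  induction n, hmn using Nat.le_induction with
  | base => simp
  | succ n hmn ih =>
    rw [prod_Ico_succ_top hmn, sum_Ico_succ_top hmn]
    have hS : 0 ≤ ∑ k ∈ Ico m n, c k := sum_nonneg fun k _ => hc k
    calc a (n + 1) ≤ (1 - α n) * a n + c n := hrec n hmn
      _ ≤ (1 - α n) * (a m * ∏ k ∈ Ico m n, (1 - α k) + ∑ k ∈ Ico m n, c k) + c n := by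
        gcongr
        exact sub_nonneg.2 (hα n).2
      _ ≤ _ := by nlinarith [mul_nonneg (hα n).1 hS]

lemma eventually_lt_add_sum_Ico (hα : ∀ n, α n ∈ Icc (0 : ℝ) 1) (hc : ∀ n, 0 ≤ c n)
    (hαdiv : Tendsto (fun n => ∑ i ∈ range n, α i) atTop atTop) {m : ℕ}
    (hrec : ∀ n ≥ m, a (n + 1) ≤ (1 - α n) * a n + c n) {ε : ℝ} (hε : 0 < ε) :
    ∀ᶠ n in atTop, a n < ε + ∑ k ∈ Ico m n, c k := by
  have hprod := (tendsto_prod_Ico_one_sub_atTop_zero (fun n => (hα n).2) hαdiv m).const_mul (a m)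
  rw [mul_zero] at hprod
  filter_upwards [hprod.eventually_lt_const hε, eventually_ge_atTop m] with n hn hmn
  linarith [le_mul_prod_Ico_add_sum_Ico hα hc hrec hmn]

theorem tendsto_zero_of_le_one_sub_mul_add_of_summable (ha : ∀ n, 0 ≤ a n)
    (hα : ∀ n, α n ∈ Icc (0 : ℝ) 1) (hc : ∀ n, 0 ≤ c n)
    (hαdiv : Tendsto (fun n => ∑ i ∈ range n, α i) atTop atTop)
    (hrec : ∀ n, a (n + 1) ≤ (1 - α n) * a n + c n) (hcs : Summable c) :
    Tendsto a atTop (𝓝 0) := by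
  refine tendsto_order.2 ⟨fun b hb => .of_forall fun n => hb.trans_le (ha n), fun ε hε => ?_⟩
  have htail : Tendsto (fun m => ∑' k, c k - ∑ k ∈ range m, c k) atTop (𝓝 0) := by
    simpa using hcs.hasSum.tendsto_sum_nat.const_sub (∑' k, c k)
  obtain ⟨m, hm⟩ := (htail.eventually_lt_const (half_pos hε)).exists
  filter_upwards [eventually_lt_add_sum_Ico hα hc hαdiv (fun n _ => hrec n) (half_pos hε),
    eventually_ge_atTop m] with n hn hmn
  have := hcs.sum_le_tsum (range n) fun i _ => hc i
  rw [sum_Ico_eq_sub _ hmn] at hn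
  linarith

theorem tendsto_zero_of_le_one_sub_mul_add_of_div_tendsto_zero (ha : ∀ n, 0 ≤ a n)
    (hα1 : ∀ n, α n ≤ 1) (hαpos : ∀ n, 0 < α n)
    (hαdiv : Tendsto (fun n => ∑ i ∈ range n, α i) atTop atTop)
    (hrec : ∀ n, a (n + 1) ≤ (1 - α n) * a n + c n)
    (hcα : Tendsto (fun n => c n / α n) atTop (𝓝 0)) :
    Tendsto a atTop (𝓝 0) := by
  refine tendsto_order.2 ⟨fun b hb => .of_forall fun n => hb.trans_le (ha n), fun ε hε => ?_⟩
  obtain ⟨m, hm⟩ := eventually_atTop.1 (hcα.eventually_lt_const (half_pos hε))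
  -- once `cₙ < (ε/2) αₙ`, the excess of `aₙ` over `ε/2` contracts by `1 - αₙ`
  have hrec' : ∀ n ≥ m, max (a (n + 1) - ε / 2) 0 ≤ (1 - α n) * max (a n - ε / 2) 0 + 0 := by
    intro n hn
    have hcn : c n < ε / 2 * α n := (div_lt_iff₀ (hαpos n)).1 (hm n hn)
    have h1 : 0 ≤ 1 - α n := sub_nonneg.2 (hα1 n)
    rw [add_zero]
    refine max_le ?_ (mul_nonneg h1 (le_max_right _ _))
    nlinarith [hrec n, mul_le_mul_of_nonneg_left (le_max_left (a n - ε / 2) 0) h1]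
  filter_upwards [eventually_lt_add_sum_Ico (a := fun n => max (a n - ε / 2) 0)
    (fun n => ⟨(hαpos n).le, hα1 n⟩) (fun _ => le_rfl) hαdiv hrec' (half_pos hε)] with n hn
  rw [sum_const_zero, add_zero] at hn
  linarith [le_max_left (a n - ε / 2) 0]

end XuLemma

section AlternatingHalpernMann

variable {E : Type*} [SeminormedAddCommGroup E] [NormedSpace ℝ E]

lemma norm_convexCombo_sub_convexCombo_le {a : ℝ} (ha : a ∈ Icc (0 : ℝ) 1) (p q v w : E) :
    ‖((1 - a) • p + a • v) - ((1 - a) • q + a • w)‖ ≤ (1 - a) * ‖p - q‖ + a * ‖v - w‖ := by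
  calc _ = ‖(1 - a) • (p - q) + a • (v - w)‖ := by
        congr 1
        simp only [smul_sub]
        abel
    _ ≤ ‖(1 - a) • (p - q)‖ + ‖a • (v - w)‖ := norm_add_le _ _
    _ = _ := by
      rw [norm_smul, norm_smul, Real.norm_of_nonneg (sub_nonneg.2 ha.2), Real.norm_of_nonneg ha.1]

lemma norm_sub_halpernStep_le {T : E → E} {y z u y' : E} {a d : ℝ}
    (hT : ‖T y - T z‖ ≤ ‖y - z‖) (ha : a ∈ Icc (0 : ℝ) 1)
    (hy' : ‖y' - ((1 - a) • T y + a • u)‖ ≤ d) :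
    ‖y' - ((1 - a) • T z + a • u)‖ ≤ (1 - a) * ‖y - z‖ + d := by
  have hstep := norm_convexCombo_sub_convexCombo_le ha (T y) (T z) u u
  rw [sub_self, norm_zero, mul_zero, add_zero] at hstep
  have := mul_le_mul_of_nonneg_left hT (sub_nonneg.2 ha.2)
  linarith [norm_sub_le_norm_sub_add_norm_sub y' ((1 - a) • T y + a • u) ((1 - a) • T z + a • u)]

lemma norm_sub_mannStep_le {U : E → E} {y z y' : E} {b d : ℝ}
    (hU : ‖U y - U z‖ ≤ ‖y - z‖) (hb : b ∈ Icc (0 : ℝ) 1)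
    (hy' : ‖y' - ((1 - b) • U y + b • y)‖ ≤ d) :
    ‖y' - ((1 - b) • U z + b • z)‖ ≤ ‖y - z‖ + d := by
  have hstep := norm_convexCombo_sub_convexCombo_le hb (U y) (U z) y z
  have := mul_le_mul_of_nonneg_left hU (sub_nonneg.2 hb.2)
  linarith [norm_sub_le_norm_sub_add_norm_sub y' ((1 - b) • U y + b • y) ((1 - b) • U z + b • z)]

lemma alternating_halpernMann_mem {C : Set E} (hC : Convex ℝ C) {T U : E → E}
    (hT : MapsTo T C C) (hU : MapsTo U C C) {u : E} (hu : u ∈ C) {α β : ℕ → ℝ}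
    (hα : ∀ n, α n ∈ Icc (0 : ℝ) 1) (hβ : ∀ n, β n ∈ Icc (0 : ℝ) 1) {x : ℕ → E} (hx0 : x 0 ∈ C)
    (hxodd : ∀ n, x (2 * n + 1) = (1 - α n) • T (x (2 * n)) + α n • u)
    (hxeven : ∀ n, x (2 * n + 2) = (1 - β n) • U (x (2 * n + 1)) + β n • x (2 * n + 1))
    (n : ℕ) : x n ∈ C := by
  have hodd : ∀ n, x (2 * n) ∈ C → x (2 * n + 1) ∈ C := fun n h =>
    hxodd n ▸ hC (hT h) hu (sub_nonneg.2 (hα n).2) (hα n).1 (sub_add_cancel 1 _)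
  have heven : ∀ n, x (2 * n) ∈ C := by
    intro n
    induction n with
    | zero => exact hx0
    | succ n ih =>
      rw [mul_add_one, hxeven]
      exact hC (hU (hodd n ih)) (hodd n ih) (sub_nonneg.2 (hβ n).2) (hβ n).1 (sub_add_cancel 1 _)
  obtain ⟨k, rfl | rfl⟩ := Nat.even_or_odd' n
  exacts [heven k, hodd k (heven k)]

end AlternatingHalpernMann

theorem stmt18_general {H : Type*} [NormedAddCommGroup H] [InnerProductSpace ℝ H]
    (C : Set H) (hCconv : Convex ℝ C)
    (T U : H → H) (hTmaps : Set.MapsTo T C C) (hUmaps : Set.MapsTo U C C)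
    (hTne : ∀ x ∈ C, ∀ y ∈ C, ‖T x - T y‖ ≤ ‖x - y‖)
    (hUne : ∀ x ∈ C, ∀ y ∈ C, ‖U x - U y‖ ≤ ‖x - y‖)
    (u x₀ : H) (hu : u ∈ C) (hx₀ : x₀ ∈ C)
    (α β : ℕ → ℝ)
    (hα : ∀ n, α n ∈ Set.Icc (0 : ℝ) 1) (hβ : ∀ n, β n ∈ Set.Icc (0 : ℝ) 1)
    (hαdiv : Tendsto (fun n => ∑ i ∈ Finset.range n, α i) atTop atTop)
    (x : ℕ → H) (hx0 : x 0 = x₀)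
    (hxodd : ∀ n, x (2 * n + 1) = (1 - α n) • T (x (2 * n)) + α n • u)
    (hxeven : ∀ n, x (2 * n + 2) = (1 - β n) • U (x (2 * n + 1)) + β n • x (2 * n + 1))
    (δ : ℕ → ℝ) (hδ : ∀ n, 0 ≤ δ n)
    (x' : ℕ → H) (hx'mem : ∀ n, x' n ∈ C)
    (hx'odd : ∀ n, ‖x' (2 * n + 1) - ((1 - α n) • T (x' (2 * n)) + α n • u)‖ ≤ δ (2 * n))
    (hx'even : ∀ n,
      ‖x' (2 * n + 2) - ((1 - β n) • U (x' (2 * n + 1)) + β n • x' (2 * n + 1))‖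
        ≤ δ (2 * n + 1))
    (hcase : Summable δ ∨
      ((∀ n, 0 < α n) ∧
        Tendsto (fun n => (δ (2 * n) + δ (2 * n + 1)) / α n) atTop (nhds 0))) :
    Tendsto (fun n => ‖x' n - x n‖) atTop (nhds 0) := by
  have hxC := alternating_halpernMann_mem hCconv hTmaps hUmaps hu hα hβ (hx0 ▸ hx₀) hxodd hxeven
  have hodd (n : ℕ) :
      ‖x' (2 * n + 1) - x (2 * n + 1)‖ ≤ (1 - α n) * ‖x' (2 * n) - x (2 * n)‖ + δ (2 * n) := by
    rw [hxodd]
    exact norm_sub_halpernStep_le (hTne _ (hx'mem _) _ (hxC _)) (hα n) (hx'odd n)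
  have heven (n : ℕ) :
      ‖x' (2 * n + 2) - x (2 * n + 2)‖ ≤ ‖x' (2 * n + 1) - x (2 * n + 1)‖ + δ (2 * n + 1) := by
    rw [hxeven]
    exact norm_sub_mannStep_le (hUne _ (hx'mem _) _ (hxC _)) (hβ n) (hx'even n)
  have hrec (n : ℕ) : ‖x' (2 * (n + 1)) - x (2 * (n + 1))‖
      ≤ (1 - α n) * ‖x' (2 * n) - x (2 * n)‖ + (δ (2 * n) + δ (2 * n + 1)) := by
    rw [mul_add_one]
    linarith [hodd n, heven n]
  have hc (n : ℕ) : 0 ≤ δ (2 * n) + δ (2 * n + 1) := add_nonneg (hδ _) (hδ _)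
  obtain ⟨hevenLim, hcLim⟩ : Tendsto (fun n => ‖x' (2 * n) - x (2 * n)‖) atTop (𝓝 0) ∧
      Tendsto (fun n => δ (2 * n) + δ (2 * n + 1)) atTop (𝓝 0) := by
    rcases hcase with hδs | ⟨hαpos, hratio⟩
    · have hcs : Summable fun n => δ (2 * n) + δ (2 * n + 1) :=
        (hδs.comp_injective (mul_right_injective₀ two_ne_zero)).add
          (hδs.comp_injective ((add_left_injective 1).comp (mul_right_injective₀ two_ne_zero)))
      exact ⟨tendsto_zero_of_le_one_sub_mul_add_of_summable (fun _ => norm_nonneg _) hα hc hαdiv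
        hrec hcs, hcs.tendsto_atTop_zero⟩
    · exact ⟨tendsto_zero_of_le_one_sub_mul_add_of_div_tendsto_zero (fun _ => norm_nonneg _)
        (fun n => (hα n).2) hαpos hαdiv hrec hratio,
        squeeze_zero hc (fun n => le_div_self (hc n) (hαpos n) (hα n).2) hratio⟩
  refine Nat.tendsto_of_tendsto_even_of_tendsto_odd hevenLim
    (squeeze_zero (fun _ => norm_nonneg _) (fun n => (hodd n).trans ?_)
      (by simpa using hevenLim.add hcLim))
  have := mul_le_of_le_one_left (norm_nonneg (x' (2 * n) - x (2 * n))) (sub_le_self 1 (hα n).1)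
  linarith [hδ (2 * n + 1)]

/-- If `(x'ₙ)` is the alternating Halpern–Mann iteration with error terms
`(δₙ)` and either `∑ δₙ < ∞` or `(δ_{2n} + δ_{2n+1})/αₙ → 0`, then
`‖x'ₙ - xₙ‖ → 0`. -/
theorem stmt18 {H : Type*} [NormedAddCommGroup H] [InnerProductSpace ℝ H]
    (C : Set H) (hCne : C.Nonempty) (hCconv : Convex ℝ C)
    (T U : H → H) (hTmaps : Set.MapsTo T C C) (hUmaps : Set.MapsTo U C C)
    (hTne : ∀ x ∈ C, ∀ y ∈ C, ‖T x - T y‖ ≤ ‖x - y‖)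
    (hUne : ∀ x ∈ C, ∀ y ∈ C, ‖U x - U y‖ ≤ ‖x - y‖)
    (u x₀ : H) (hu : u ∈ C) (hx₀ : x₀ ∈ C)
    (α β : ℕ → ℝ)
    (hα : ∀ n, α n ∈ Set.Icc (0 : ℝ) 1) (hβ : ∀ n, β n ∈ Set.Icc (0 : ℝ) 1)
    (hαdiv : Tendsto (fun n => ∑ i ∈ Finset.range n, α i) atTop atTop)
    (x : ℕ → H) (hx0 : x 0 = x₀)
    (hxodd : ∀ n, x (2 * n + 1) = (1 - α n) • T (x (2 * n)) + α n • u)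
    (hxeven : ∀ n, x (2 * n + 2) = (1 - β n) • U (x (2 * n + 1)) + β n • x (2 * n + 1))
    (δ : ℕ → ℝ) (hδ : ∀ n, 0 ≤ δ n)
    (x' : ℕ → H) (hx'mem : ∀ n, x' n ∈ C) (hx'0 : x' 0 = x₀)
    (hx'odd : ∀ n, ‖x' (2 * n + 1) - ((1 - α n) • T (x' (2 * n)) + α n • u)‖ ≤ δ (2 * n))
    (hx'even : ∀ n,
      ‖x' (2 * n + 2) - ((1 - β n) • U (x' (2 * n + 1)) + β n • x' (2 * n + 1))‖
        ≤ δ (2 * n + 1))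
    (hcase : Summable δ ∨
      ((∀ n, 0 < α n) ∧
        Tendsto (fun n => (δ (2 * n) + δ (2 * n + 1)) / α n) atTop (nhds 0))) :
    Tendsto (fun n => ‖x' n - x n‖) atTop (nhds 0) :=
  stmt18_general C hCconv T U hTmaps hUmaps hTne hUne u x₀ hu hx₀ α β hα hβ hαdiv x hx0 hxodd hxeven
    δ hδ x' hx'mem hx'odd hx'even hcase
end

section
/- Let H be a real Hilbert space and α ∈ (0,1]. Let U : H → H be α-averaged, i.e. U = (1 − α)·Id + α·U' for some nonexpansive U' : H → H, and assume Fix(U) ≠ ∅ with p ∈ Fix(U). Let (α_n) ⊂ [0,1] and (β_n) ⊂ [1 − 1/α, 1] satisfy: lim α_n = 0; ∑ α_n = ∞; ∑ |α_{n+1} − α_n| < ∞; ∑ |β_{n+1} − β_n| < ∞; and there exist σ ∈ (0,1) with α ≥ σ and γ ∈ (0, 1/(2σ)] such that 1 − 1/α + γ ≤ β_n ≤ 1 − γ for all n. Let x₀, u ∈ H and let (x_n) be defined by x_0 = x₀, x_{2n+1} = (1 − α_n)·x_{2n} + α_n·u and x_{2n+2} = (1 − β_n)·U(x_{2n+1})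 + β_n·x_{2n+1}. Then (x_n) converges strongly to the point z ∈ Fix(U) satisfying ‖u − z‖ ≤ ‖u − y‖ for all y ∈ Fix(U) (the metric projection of u onto Fix(U)). -/
/-!
With `c n = α (1 - β n) ∈ [α γ, 1]` the even steps are Krasnoselskii–Mann steps
`v ↦ (1 - c n) • v + c n • U' v` of the nonexpansive map `U'`, alternating with Halpern steps
towards `u`, and `Fix U = Fix U'`. The iterates stay in a ball around a fixed point, and Xu's
lemma applied to `‖x (2n+2) - x (2n)‖`, whose error terms are `|a (n+1) - a n|` and
`|β (n+1) - β n|`, gives asymptotic regularity `‖x (2n+1) - U' (x (2n+1))‖ → 0`.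

The anchor `z` is the strong limit of Browder's path `z_t = t • u + (1 - t) • U' z_t` as `t → 0`,
which is the fixed point nearest to `u`. Instead of demiclosedness and weak compactness, the
estimate `2 t ⟪u - z_t, v - z_t⟫ ≤ t² ‖z_t - v‖² + O(‖v - U' v‖)` yields
`limsup ⟪u - z, x (2n+1) - z⟫ ≤ 0`, and Xu's lemma applied to `‖x (2n) - z‖²` concludes.
-/

open Filter Topology RealInnerProductSpace

theorem tendsto_prod_one_sub_of_not_summable {a : ℕ → ℝ} (ha0 : ∀ n, 0 ≤ a n)
    (ha1 : ∀ n, a n ≤ 1) (ha : ¬ Summable a) :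
    Tendsto (fun k => ∏ j ∈ Finset.range k, (1 - a j)) atTop (𝓝 0) := by
  have hsum := (not_summable_iff_tendsto_nat_atTop_of_nonneg ha0).1 ha
  refine squeeze_zero (fun k => Finset.prod_nonneg fun j _ => sub_nonneg.2 (ha1 j))
    (fun k => ?_) (Real.tendsto_exp_atBot.comp (tendsto_neg_atTop_atBot.comp hsum))
  calc ∏ j ∈ Finset.range k, (1 - a j) ≤ ∏ j ∈ Finset.range k, Real.exp (-a j) :=
        Finset.prod_le_prod (fun j _ => sub_nonneg.2 (ha1 j))
          fun j _ => by linarith [Real.add_one_le_exp (-a j)]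
    _ = Real.exp (-∑ j ∈ Finset.range k, a j) := by
        rw [← Real.exp_sum, Finset.sum_neg_distrib]

theorem le_prod_mul_add_sum_of_le {s a e : ℕ → ℝ} {N : ℕ} (ha0 : ∀ n, 0 ≤ a n)
    (ha1 : ∀ n, a n ≤ 1) (he0 : ∀ n, 0 ≤ e n)
    (hrec : ∀ n ≥ N, s (n + 1) ≤ (1 - a n) * s n + e n) (k : ℕ) :
    s (k + N) ≤ (∏ j ∈ Finset.range k, (1 - a (j + N))) * s N
      + ∑ j ∈ Finset.range k, e (j + N) := by
  induction k with
  | zero => simp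
  | succ k ih =>
    have hE : 0 ≤ ∑ j ∈ Finset.range k, e (j + N) := Finset.sum_nonneg fun j _ => he0 _
    have hstep := hrec (k + N) (Nat.le_add_left N k)
    rw [Finset.prod_range_succ, Finset.sum_range_succ, Nat.add_right_comm]
    nlinarith [mul_le_mul_of_nonneg_left ih (sub_nonneg.2 (ha1 (k + N))), ha0 (k + N)]

/-- Xu's lemma. -/
theorem tendsto_zero_of_le_one_sub_mul_add {s a b e : ℕ → ℝ} (hs : ∀ n, 0 ≤ s n)
    (ha0 : ∀ n, 0 ≤ a n) (ha1 : ∀ n, a n ≤ 1) (ha : ¬ Summable a)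
    (hb : ∀ ε > 0, ∀ᶠ n in atTop, b n ≤ ε) (he0 : ∀ n, 0 ≤ e n) (he : Summable e)
    (hrec : ∀ n, s (n + 1) ≤ (1 - a n) * s n + a n * b n + e n) :
    Tendsto s atTop (𝓝 0) := by
  refine tendsto_order.2 ⟨fun c hc => .of_forall fun n => hc.trans_le (hs n), fun ε hε => ?_⟩
  obtain ⟨N₁, hbN⟩ := eventually_atTop.1 (hb (ε / 3) (by positivity))
  obtain ⟨N, hN, htail⟩ := ((eventually_ge_atTop N₁).and
    ((tendsto_sum_nat_add e).eventually_lt_const (by positivity : (0 : ℝ) < ε / 3))).exists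
  have hiter := le_prod_mul_add_sum_of_le (s := fun n => s n - ε / 3) (N := N) ha0 ha1 he0
    fun n hn => by
      have := mul_le_mul_of_nonneg_left (hbN n (hN.trans hn)) (ha0 n)
      linarith [hrec n]
  have hprod : Tendsto (fun k => (∏ j ∈ Finset.range k, (1 - a (j + N))) * (s N - ε / 3))
      atTop (𝓝 0) := by
    simpa using (tendsto_prod_one_sub_of_not_summable (fun j => ha0 _) (fun j => ha1 _)
      (mt (summable_nat_add_iff N).1 ha)).mul_const (s N - ε / 3)
  have hsmall : ∀ᶠ k in atTop, s (k + N) < ε := by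
    filter_upwards [hprod.eventually_lt_const (by positivity : (0 : ℝ) < ε / 3)] with k hk
    have : ∑ j ∈ Finset.range k, e (j + N) ≤ ∑' j, e (j + N) :=
      ((summable_nat_add_iff N).2 he).sum_le_tsum _ fun j _ => he0 _
    linarith [hiter k]
  filter_upwards [(tendsto_sub_atTop_nat N).eventually hsmall, eventually_ge_atTop N]
    with n hn hNn
  rwa [Nat.sub_add_cancel hNn] at hn

theorem tendsto_of_tendsto_two_mul_of_tendsto_two_mul_add_one {X : Type*} {x : ℕ → X}
    {l : Filter X} (h₀ : Tendsto (fun n => x (2 * n)) atTop l)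
    (h₁ : Tendsto (fun n => x (2 * n + 1)) atTop l) : Tendsto x atTop l := by
  intro s hs
  obtain ⟨N₀, hN₀⟩ := eventually_atTop.1 (h₀ hs)
  obtain ⟨N₁, hN₁⟩ := eventually_atTop.1 (h₁ hs)
  refine eventually_atTop.2 ⟨2 * (N₀ + N₁), fun n hn => ?_⟩
  obtain ⟨k, rfl | rfl⟩ := Nat.even_or_odd' n
  · exact hN₀ k (by omega)
  · exact hN₁ k (by omega)

theorem one_sub_smul_add_smul_apply_eq_self_iff {E : Type*} [AddCommGroup E] [Module ℝ E]
    {T : E → E} {α : ℝ} (hα : α ≠ 0) (x : E) : (1 - α) • x + α • T x = x ↔ T x = x := by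
  rw [← sub_eq_zero, show (1 - α) • x + α • T x - x = α • (T x - x) by module, smul_eq_zero,
    sub_eq_zero, or_iff_right hα]

section InnerProductSpace

variable {H : Type*} [NormedAddCommGroup H] [InnerProductSpace ℝ H]

theorem norm_add_sq_le_norm_sq_add_two_inner (x y : H) :
    ‖x + y‖ ^ 2 ≤ ‖x‖ ^ 2 + 2 * ⟪y, x + y⟫ := by
  rw [norm_add_sq_real, inner_add_right, real_inner_self_eq_norm_sq, real_inner_comm]
  nlinarith [sq_nonneg ‖y‖]

theorem norm_sub_le_norm_sub_of_norm_sq_le_inner {u z q : H}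
    (h : ‖z - q‖ ^ 2 ≤ ⟪u - q, z - q⟫) : ‖u - z‖ ≤ ‖u - q‖ := by
  have hsplit : u - q = (u - z) + (z - q) := by abel
  have hinner : ⟪u - q, z - q⟫ = ⟪u - z, z - q⟫ + ‖z - q‖ ^ 2 := by
    rw [hsplit, inner_add_left, real_inner_self_eq_norm_sq]
  have hnorm := norm_add_sq_real (u - z) (z - q)
  rw [← hsplit] at hnorm
  refine pow_le_pow_iff_left₀ (norm_nonneg _) (norm_nonneg _) two_ne_zero |>.1 ?_
  nlinarith [sq_nonneg ‖z - q‖]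

theorem inner_sub_sub_le_inner_sub_sub_add (u v y z : H) :
    ⟪u - z, y - z⟫ ≤ ⟪u - v, y - v⟫ + ‖v - z‖ * (‖u - v‖ + ‖y - z‖) := by
  have hsplit : ⟪u - z, y - z⟫ = ⟪u - v, y - v⟫ + ⟪u - v, v - z⟫ + ⟪v - z, y - z⟫ := by
    have e1 : u - z = (u - v) + (v - z) := by abel
    have e2 : y - z = (y - v) + (v - z) := by abel
    rw [e1, inner_add_left, e2, inner_add_right, ← e2]
  rw [hsplit]
  linarith [real_inner_le_norm (u - v) (v - z), real_inner_le_norm (v - z) (y - z)]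

variable {T : H → H}

theorem norm_convexComb_apply_sub_le (hT : ∀ x y, ‖T x - T y‖ ≤ ‖x - y‖) {c : ℝ}
    (hc0 : 0 ≤ c) (hc1 : c ≤ 1) (x y : H) :
    ‖((1 - c) • x + c • T x) - ((1 - c) • y + c • T y)‖ ≤ ‖x - y‖ := by
  have hsplit : ((1 - c) • x + c • T x) - ((1 - c) • y + c • T y)
      = (1 - c) • (x - y) + c • (T x - T y) := by module
  calc _ ≤ ‖(1 - c) • (x - y)‖ + ‖c • (T x - T y)‖ := hsplit ▸ norm_add_le _ _
    _ = (1 - c) * ‖x - y‖ + c * ‖T x - T y‖ := by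
        rw [norm_smul, norm_smul, Real.norm_of_nonneg (sub_nonneg.2 hc1),
          Real.norm_of_nonneg hc0]
    _ ≤ (1 - c) * ‖x - y‖ + c * ‖x - y‖ := by gcongr; exact hT x y
    _ = ‖x - y‖ := by ring

theorem norm_convexComb_apply_sub_fixedPoint_le (hT : ∀ x y, ‖T x - T y‖ ≤ ‖x - y‖)
    {c : ℝ} (hc0 : 0 ≤ c) (hc1 : c ≤ 1) {p : H} (hp : T p = p) (x : H) :
    ‖((1 - c) • x + c • T x) - p‖ ≤ ‖x - p‖ := by
  have hcomb : (1 - c) • p + c • T p = p := by rw [hp]; module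
  simpa only [hcomb] using norm_convexComb_apply_sub_le hT hc0 hc1 x p

theorem inner_sub_apply_sub_sub_apply_nonneg (hT : ∀ x y, ‖T x - T y‖ ≤ ‖x - y‖)
    (x y : H) : 0 ≤ ⟪(x - T x) - (y - T y), x - y⟫ := by
  have hsplit : (x - T x) - (y - T y) = (x - y) - (T x - T y) := by abel
  rw [hsplit, inner_sub_left, real_inner_self_eq_norm_sq]
  nlinarith [real_inner_le_norm (T x - T y) (x - y), hT x y, norm_nonneg (x - y)]

def IsBrowderPoint (T : H → H) (u : H) (t : ℝ) (v : H) : Prop :=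
  v = t • u + (1 - t) • T v

theorem exists_isBrowderPoint [CompleteSpace H] (hT : ∀ x y, ‖T x - T y‖ ≤ ‖x - y‖) (u : H)
    {t : ℝ} (ht0 : 0 < t) (ht1 : t ≤ 1) : ∃ v, IsBrowderPoint T u t v := by
  have hK : (1 - t).toNNReal < 1 := by simpa using ht0
  have hlip : LipschitzWith (1 - t).toNNReal fun v => t • u + (1 - t) • T v := by
    refine LipschitzWith.of_dist_le_mul fun v w => ?_
    rw [dist_eq_norm, dist_eq_norm, Real.coe_toNNReal _ (sub_nonneg.2 ht1),
      add_sub_add_left_eq_sub, ← smul_sub, norm_smul, Real.norm_of_nonneg (sub_nonneg.2 ht1)]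
    exact mul_le_mul_of_nonneg_left (hT v w) (sub_nonneg.2 ht1)
  exact ⟨_, (ContractingWith.fixedPoint_isFixedPt ⟨hK, hlip⟩).symm⟩

namespace IsBrowderPoint

variable {u v : H} {t : ℝ}

theorem one_sub_smul_sub_apply (hv : IsBrowderPoint T u t v) :
    (1 - t) • (v - T v) = t • (u - v) := by
  unfold IsBrowderPoint at hv
  linear_combination (norm := module) hv

theorem norm_sub_sq_le_inner (hv : IsBrowderPoint T u t v)
    (hT : ∀ x y, ‖T x - T y‖ ≤ ‖x - y‖) (ht0 : 0 < t) (ht1 : t ≤ 1) {q : H} (hq : T q = q) :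
    ‖v - q‖ ^ 2 ≤ ⟪u - q, v - q⟫ := by
  have hsplit : v - q = t • (u - q) + (1 - t) • (T v - T q) := by
    rw [hq]; nth_rewrite 1 [hv]; module
  have hexp : ‖v - q‖ ^ 2 = t * ⟪u - q, v - q⟫ + (1 - t) * ⟪T v - T q, v - q⟫ := by
    rw [← real_inner_self_eq_norm_sq]
    nth_rewrite 1 [hsplit]
    rw [inner_add_left, real_inner_smul_left, real_inner_smul_left]
  have hTvq : ⟪T v - T q, v - q⟫ ≤ ‖v - q‖ ^ 2 := by
    nlinarith [real_inner_le_norm (T v - T q) (v - q), hT v q, norm_nonneg (v - q)]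
  nlinarith [mul_le_mul_of_nonneg_left hTvq (sub_nonneg.2 ht1)]

theorem norm_sq_add_norm_sub_sq_le {v' : H} {t' : ℝ} (hv : IsBrowderPoint T u t v)
    (hv' : IsBrowderPoint T u t' v') (hT : ∀ x y, ‖T x - T y‖ ≤ ‖x - y‖)
    (ht' : 0 < t') (htt : t' < t) (ht1 : t < 1) :
    ‖u - v‖ ^ 2 + ‖v - v'‖ ^ 2 ≤ ‖u - v'‖ ^ 2 := by
  set X := ⟪u - v, v - v'⟫
  have hsplit : u - v' = (u - v) + (v - v') := by abel
  have hA : (1 - t) * ⟪v - T v, v - v'⟫ = t * X := by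
    rw [← real_inner_smul_left, hv.one_sub_smul_sub_apply, real_inner_smul_left]
  have hB : (1 - t') * ⟪v' - T v', v - v'⟫ = t' * (X + ‖v - v'‖ ^ 2) := by
    rw [← real_inner_smul_left, hv'.one_sub_smul_sub_apply, real_inner_smul_left,
      hsplit, inner_add_left, real_inner_self_eq_norm_sq]
  have hmono := inner_sub_apply_sub_sub_apply_nonneg hT v v'
  rw [inner_sub_left] at hmono
  have hX : 0 ≤ X := by
    nlinarith [mul_nonneg (mul_nonneg (sub_nonneg.2 ht1.le) (by linarith : (0 : ℝ) ≤ 1 - t'))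
      hmono, mul_nonneg (mul_nonneg (sub_nonneg.2 ht1.le) ht'.le) (sq_nonneg ‖v - v'‖)]
  rw [hsplit, norm_add_sq_real]
  linarith

theorem two_mul_inner_le (hv : IsBrowderPoint T u t v) (hT : ∀ x y, ‖T x - T y‖ ≤ ‖x - y‖)
    (ht0 : 0 ≤ t) (ht1 : t ≤ 1) (y : H) :
    2 * t * ⟪u - v, y - v⟫
      ≤ t ^ 2 * ‖v - y‖ ^ 2 + (2 * ‖v - y‖ + ‖y - T y‖) * ‖y - T y‖ := by
  set D := ‖v - y‖
  set ρ := ‖y - T y‖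
  have hsplit : v - y = (1 - t) • (T v - y) + t • (u - y) := by nth_rewrite 1 [hv]; module
  have hA : ‖(1 - t) • (T v - y)‖ ≤ (1 - t) * (D + ρ) := by
    rw [norm_smul, Real.norm_of_nonneg (sub_nonneg.2 ht1)]
    refine mul_le_mul_of_nonneg_left ?_ (sub_nonneg.2 ht1)
    calc ‖T v - y‖ = ‖(T v - T y) + (T y - y)‖ := by rw [sub_add_sub_cancel]
      _ ≤ ‖T v - T y‖ + ‖T y - y‖ := norm_add_le _ _
      _ ≤ D + ρ := by rw [norm_sub_rev (T y)]; exact add_le_add_left (hT v y) _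
  have hB : ⟪t • (u - y), v - y⟫ = t * (‖v - y‖ ^ 2 - ⟪u - v, y - v⟫) := by
    have : u - y = (u - v) + (v - y) := by abel
    rw [real_inner_smul_left, this, inner_add_left, real_inner_self_eq_norm_sq,
      ← neg_sub v y, inner_neg_right]
    ring
  have hmain := norm_add_sq_le_norm_sq_add_two_inner ((1 - t) • (T v - y)) (t • (u - y))
  rw [← hsplit, hB] at hmain
  have hA2 := pow_le_pow_left₀ (norm_nonneg _) hA 2
  have hD : 0 ≤ D := norm_nonneg _
  have hρ : 0 ≤ ρ := norm_nonneg _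
  nlinarith [mul_nonneg (mul_nonneg ht0 (by linarith : (0 : ℝ) ≤ 2 - t))
    (by positivity : 0 ≤ 2 * D * ρ + ρ ^ 2)]

end IsBrowderPoint

theorem cauchySeq_of_isBrowderPoint (hT : ∀ x y, ‖T x - T y‖ ≤ ‖x - y‖) {u p : H}
    (hp : T p = p) {t : ℕ → ℝ} {zs : ℕ → H} (ht0 : ∀ k, 0 < t k) (ht1 : ∀ k, t k < 1)
    (ht : StrictAnti t) (hzs : ∀ k, IsBrowderPoint T u (t k) (zs k)) : CauchySeq zs := by
  set φ := fun k => ‖u - zs k‖ ^ 2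
  have hstep : ∀ k k', k < k' → φ k + ‖zs k - zs k'‖ ^ 2 ≤ φ k' := fun k k' hk =>
    (hzs k).norm_sq_add_norm_sub_sq_le (hzs k') hT (ht0 k') (ht hk) (ht1 k)
  have hmono : Monotone φ := monotone_nat_of_le_succ fun k => by
    linarith [hstep k (k + 1) k.lt_succ_self, sq_nonneg ‖zs k - zs (k + 1)‖]
  have hbdd : BddAbove (Set.range φ) := by
    refine ⟨(2 * ‖u - p‖) ^ 2, ?_⟩
    rintro _ ⟨k, rfl⟩
    have hzp : ‖zs k - p‖ ≤ ‖u - p‖ := by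
      have := (hzs k).norm_sub_sq_le_inner hT (ht0 k) (ht1 k).le hp
      nlinarith [real_inner_le_norm (u - p) (zs k - p), norm_nonneg (zs k - p),
        norm_nonneg (u - p)]
    have huz : ‖u - zs k‖ ≤ 2 * ‖u - p‖ := by
      linarith [norm_sub_le_norm_sub_add_norm_sub u p (zs k), norm_sub_rev (zs k) p]
    exact pow_le_pow_left₀ (norm_nonneg _) huz 2
  have hφ := tendsto_atTop_ciSup hmono hbdd
  refine Metric.cauchySeq_iff'.2 fun ε hε => ?_
  obtain ⟨N, hN⟩ := (hφ.eventually_const_lt (sub_lt_self _ (pow_pos hε 2))).exists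
  refine ⟨N, fun n hn => ?_⟩
  rcases hn.eq_or_lt with rfl | hNn
  · simpa using hε
  have hsq : dist (zs n) (zs N) ^ 2 < ε ^ 2 := by
    rw [dist_comm, dist_eq_norm]
    linarith [hstep N n hNn, hmono.ge_of_tendsto hφ n]
  exact lt_of_pow_lt_pow_left₀ 2 hε.le hsq

theorem inner_sub_sub_le_of_isBrowderPoint (hT : ∀ x y, ‖T x - T y‖ ≤ ‖x - y‖) {u z : H}
    {t : ℕ → ℝ} {zs : ℕ → H} (ht0 : ∀ k, 0 < t k) (ht1 : ∀ k, t k ≤ 1)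
    (ht : Tendsto t atTop (𝓝 0)) (hzs : ∀ k, IsBrowderPoint T u (t k) (zs k))
    (hz : Tendsto zs atTop (𝓝 z)) {y : ℕ → H} (hy : Bornology.IsBounded (Set.range y))
    (hρ : Tendsto (fun n => ‖y n - T (y n)‖) atTop (𝓝 0)) {ε : ℝ} (hε : 0 < ε) :
    ∀ᶠ n in atTop, ⟪u - z, y n - z⟫ ≤ ε := by
  obtain ⟨R, hR⟩ := Metric.isBounded_iff.1
    ((((Metric.isBounded_range_of_tendsto zs hz).union hy).insert u).insert z)
  have hzy : ∀ k n, ‖zs k - y n‖ ≤ R := fun k n => by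
    simpa [dist_eq_norm] using hR (x := zs k) (by simp) (y := y n) (by simp)
  have huzs : ∀ k, ‖u - zs k‖ ≤ R := fun k => by
    simpa [dist_eq_norm] using hR (x := u) (by simp) (y := zs k) (by simp)
  have hyz : ∀ n, ‖y n - z‖ ≤ R := fun n => by
    simpa [dist_eq_norm] using hR (x := y n) (by simp) (y := z) (by simp)
  have hsmall_t : Tendsto (fun k => t k * R ^ 2) atTop (𝓝 0) := by
    simpa using ht.mul_const (R ^ 2)
  have hsmall_z : Tendsto (fun k => ‖zs k - z‖ * (2 * R)) atTop (𝓝 0) := by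
    simpa using (tendsto_iff_norm_sub_tendsto_zero.1 hz).mul_const (2 * R)
  obtain ⟨k, hkt, hkz⟩ := ((hsmall_t.eventually_lt_const (half_pos hε)).and
    (hsmall_z.eventually_lt_const (half_pos hε))).exists
  have hsmall_ρ : Tendsto (fun n => (2 * R + ‖y n - T (y n)‖) * ‖y n - T (y n)‖) atTop
      (𝓝 0) := by
    simpa using (hρ.const_add (2 * R)).mul hρ
  filter_upwards [hsmall_ρ.eventually_lt_const (mul_pos (ht0 k) (half_pos hε))] with n hn
  have hI : ⟪u - zs k, y n - zs k⟫ < ε / 2 := by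
    have hkey := (hzs k).two_mul_inner_le hT (ht0 k).le (ht1 k) (y n)
    have hD2 : t k ^ 2 * ‖zs k - y n‖ ^ 2 ≤ t k * (t k * R ^ 2) := by
      rw [← mul_assoc, ← sq]
      exact mul_le_mul_of_nonneg_left (pow_le_pow_left₀ (norm_nonneg _) (hzy k n) 2)
        (sq_nonneg _)
    have hρD : (2 * ‖zs k - y n‖ + ‖y n - T (y n)‖) * ‖y n - T (y n)‖
        ≤ (2 * R + ‖y n - T (y n)‖) * ‖y n - T (y n)‖ := by
      gcongr
      exact hzy k n
    nlinarith [mul_lt_mul_of_pos_left hkt (ht0 k), ht0 k]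
  have hcross : ‖zs k - z‖ * (‖u - zs k‖ + ‖y n - z‖) ≤ ‖zs k - z‖ * (2 * R) :=
    mul_le_mul_of_nonneg_left (by linarith [huzs k, hyz n]) (norm_nonneg _)
  linarith [inner_sub_sub_le_inner_sub_sub_add u (zs k) (y n) z]

theorem exists_nearest_fixedPoint_limsup_inner_nonpos [CompleteSpace H]
    (hT : ∀ x y, ‖T x - T y‖ ≤ ‖x - y‖) (u : H) {p : H} (hp : T p = p) :
    ∃ z, T z = z ∧ (∀ q, T q = q → ‖u - z‖ ≤ ‖u - q‖) ∧
      ∀ y : ℕ → H, Bornology.IsBounded (Set.range y) →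
        Tendsto (fun n => ‖y n - T (y n)‖) atTop (𝓝 0) →
          ∀ ε > 0, ∀ᶠ n in atTop, ⟪u - z, y n - z⟫ ≤ ε := by
  set t : ℕ → ℝ := fun k => (1 / 2) ^ (k + 1)
  have ht0 : ∀ k, 0 < t k := fun k => by positivity
  have ht1 : ∀ k, t k < 1 := fun k => pow_lt_one₀ (by norm_num) (by norm_num) k.succ_ne_zero
  have ht : StrictAnti t := fun k k' h =>
    pow_lt_pow_right_of_lt_one₀ (by norm_num) (by norm_num) (by omega)
  have htlim : Tendsto t atTop (𝓝 0) :=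
    (tendsto_pow_atTop_nhds_zero_of_lt_one (by norm_num) (by norm_num)).comp
      (tendsto_add_atTop_nat 1)
  choose zs hzs using fun k => exists_isBrowderPoint hT u (ht0 k) (ht1 k).le
  obtain ⟨z, hz⟩ := cauchySeq_tendsto_of_complete
    (cauchySeq_of_isBrowderPoint hT hp ht0 ht1 ht hzs)
  have hTc : Continuous T :=
    (LipschitzWith.of_dist_le_mul (K := 1) fun x y => by
      simpa [dist_eq_norm] using hT x y).continuous
  have hTz : T z = z := by
    have hlim : Tendsto (fun k => t k • u + (1 - t k) • T (zs k)) atTop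
        (𝓝 ((0 : ℝ) • u + (1 - 0 : ℝ) • T z)) :=
      (htlim.smul_const u).add ((tendsto_const_nhds.sub htlim).smul ((hTc.tendsto z).comp hz))
    rw [zero_smul, zero_add, sub_zero, one_smul] at hlim
    exact (tendsto_nhds_unique (hz.congr hzs) hlim).symm
  refine ⟨z, hTz, fun q hq => ?_, fun y hy hρ ε hε =>
    inner_sub_sub_le_of_isBrowderPoint hT ht0 (fun k => (ht1 k).le) htlim hzs hz hy hρ hε⟩
  refine norm_sub_le_norm_sub_of_norm_sq_le_inner (le_of_tendsto_of_tendsto'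
    ((hz.sub_const q).norm.pow 2) (tendsto_const_nhds.inner (hz.sub_const q)) fun k => ?_)
  exact (hzs k).norm_sub_sq_le_inner hT (ht0 k) (ht1 k).le hq

structure IsHalpernMann (T : H → H) (u : H) (a c : ℕ → ℝ) (y w : ℕ → H) : Prop where
  halpern : ∀ n, w n = (1 - a n) • y n + a n • u
  mann : ∀ n, y (n + 1) = (1 - c n) • w n + c n • T (w n)

namespace IsHalpernMann

variable {u : H} {a c : ℕ → ℝ} {y w : ℕ → H}

theorem mem_closedBall (h : IsHalpernMann T u a c y w) (hT : ∀ x y, ‖T x - T y‖ ≤ ‖x - y‖)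
    {p : H} (hp : T p = p) (ha0 : ∀ n, 0 ≤ a n) (ha1 : ∀ n, a n ≤ 1) (hc0 : ∀ n, 0 ≤ c n)
    (hc1 : ∀ n, c n ≤ 1) (n : ℕ) :
    y n ∈ Metric.closedBall p (max ‖y 0 - p‖ ‖u - p‖) ∧
      w n ∈ Metric.closedBall p (max ‖y 0 - p‖ ‖u - p‖) := by
  set R := max ‖y 0 - p‖ ‖u - p‖
  have hw_mem : ∀ n, y n ∈ Metric.closedBall p R → w n ∈ Metric.closedBall p R :=
    fun n hyn => h.halpern n ▸ convex_closedBall p R hyn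
      (mem_closedBall_iff_norm.2 (le_max_right _ _)) (sub_nonneg.2 (ha1 n)) (ha0 n) (by ring)
  suffices hy_mem : y n ∈ Metric.closedBall p R from ⟨hy_mem, hw_mem n hy_mem⟩
  induction n with
  | zero => exact mem_closedBall_iff_norm.2 (le_max_left _ _)
  | succ n ih =>
    rw [mem_closedBall_iff_norm, h.mann n]
    exact (norm_convexComb_apply_sub_fixedPoint_le hT (hc0 n) (hc1 n) hp _).trans
      (mem_closedBall_iff_norm.1 (hw_mem n ih))

theorem norm_sub_succ_le (h : IsHalpernMann T u a c y w)
    (hT : ∀ x y, ‖T x - T y‖ ≤ ‖x - y‖) (ha1 : ∀ n, a n ≤ 1) (hc0 : ∀ n, 0 ≤ c n)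
    (hc1 : ∀ n, c n ≤ 1) (n : ℕ) :
    ‖y (n + 2) - y (n + 1)‖ ≤ (1 - a (n + 1)) * ‖y (n + 1) - y n‖
      + |a (n + 1) - a n| * ‖u - y n‖ + |c (n + 1) - c n| * ‖w n - T (w n)‖ := by
  have hsplit : y (n + 2) - y (n + 1)
      = (((1 - c (n + 1)) • w (n + 1) + c (n + 1) • T (w (n + 1)))
          - ((1 - c (n + 1)) • w n + c (n + 1) • T (w n)))
        + (c (n + 1) - c n) • (T (w n) - w n) := by
    rw [h.mann (n + 1), h.mann n]; module
  have hw_sub : w (n + 1) - w n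
      = (1 - a (n + 1)) • (y (n + 1) - y n) + (a (n + 1) - a n) • (u - y n) := by
    rw [h.halpern (n + 1), h.halpern n]; module
  have hw_le : ‖w (n + 1) - w n‖
      ≤ (1 - a (n + 1)) * ‖y (n + 1) - y n‖ + |a (n + 1) - a n| * ‖u - y n‖ := by
    rw [hw_sub]
    refine (norm_add_le _ _).trans_eq ?_
    rw [norm_smul, norm_smul, Real.norm_of_nonneg (sub_nonneg.2 (ha1 _)), Real.norm_eq_abs]
  rw [hsplit]
  refine (norm_add_le _ _).trans ?_
  rw [norm_smul, Real.norm_eq_abs, norm_sub_rev (T (w n))]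
  linarith [norm_convexComb_apply_sub_le hT (hc0 (n + 1)) (hc1 (n + 1)) (w (n + 1)) (w n)]

theorem tendsto_norm_sub_succ (h : IsHalpernMann T u a c y w)
    (hT : ∀ x y, ‖T x - T y‖ ≤ ‖x - y‖) (ha0 : ∀ n, 0 ≤ a n) (ha1 : ∀ n, a n ≤ 1)
    (ha : ¬ Summable a) (hΔa : Summable fun n => |a (n + 1) - a n|) (hc0 : ∀ n, 0 ≤ c n)
    (hc1 : ∀ n, c n ≤ 1) (hΔc : Summable fun n => |c (n + 1) - c n|) {C : ℝ}
    (hu : ∀ n, ‖u - y n‖ ≤ C) (hwT : ∀ n, ‖w n - T (w n)‖ ≤ C) :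
    Tendsto (fun n => ‖y (n + 1) - y n‖) atTop (𝓝 0) := by
  have hC : 0 ≤ C := (norm_nonneg _).trans (hu 0)
  refine tendsto_zero_of_le_one_sub_mul_add (b := 0)
    (e := fun n => C * (|a (n + 1) - a n| + |c (n + 1) - c n|)) (fun n => norm_nonneg _)
    (fun n => ha0 _) (fun n => ha1 _) (mt (summable_nat_add_iff 1).1 ha)
    (fun ε hε => .of_forall fun _ => hε.le) (fun n => by positivity)
    ((hΔa.add hΔc).mul_left C) fun n => ?_
  simp only [Pi.zero_apply, mul_zero, add_zero]
  linarith [h.norm_sub_succ_le hT ha1 hc0 hc1 n,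
    mul_le_mul_of_nonneg_left (hu n) (abs_nonneg (a (n + 1) - a n)),
    mul_le_mul_of_nonneg_left (hwT n) (abs_nonneg (c (n + 1) - c n))]

theorem tendsto_norm_sub_apply (h : IsHalpernMann T u a c y w) (ha0 : ∀ n, 0 ≤ a n)
    (halim : Tendsto a atTop (𝓝 0)) {δ : ℝ} (hδ : 0 < δ) (hcδ : ∀ n, δ ≤ c n) {C : ℝ}
    (hu : ∀ n, ‖u - y n‖ ≤ C) (hreg : Tendsto (fun n => ‖y (n + 1) - y n‖) atTop (𝓝 0)) :
    Tendsto (fun n => ‖w n - T (w n)‖) atTop (𝓝 0) := by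
  have hbound : ∀ n, ‖w n - T (w n)‖ ≤ δ⁻¹ * (‖y (n + 1) - y n‖ + a n * C) := fun n => by
    have hwy : y n - w n = a n • (y n - u) := by rw [h.halpern n]; module
    have hyw : y (n + 1) - w n = c n • (T (w n) - w n) := by rw [h.mann n]; module
    have hdist : c n * ‖w n - T (w n)‖ ≤ ‖y (n + 1) - y n‖ + a n * C := by
      calc c n * ‖w n - T (w n)‖ = ‖(y (n + 1) - y n) + (y n - w n)‖ := by
            rw [sub_add_sub_cancel, hyw, norm_smul, Real.norm_of_nonneg (hδ.le.trans (hcδ n)),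
              norm_sub_rev]
        _ ≤ ‖y (n + 1) - y n‖ + a n * C := by
            refine (norm_add_le _ _).trans (add_le_add_right ?_ _)
            rw [hwy, norm_smul, Real.norm_of_nonneg (ha0 n), norm_sub_rev]
            exact mul_le_mul_of_nonneg_left (hu n) (ha0 n)
    rw [le_inv_mul_iff₀ hδ]
    exact (mul_le_mul_of_nonneg_right (hcδ n) (norm_nonneg _)).trans hdist
  refine squeeze_zero (fun n => norm_nonneg _) hbound ?_
  simpa using (hreg.add (halim.mul_const C)).const_mul δ⁻¹

theorem tendsto_of_limsup_inner_nonpos (h : IsHalpernMann T u a c y w)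
    (hT : ∀ x y, ‖T x - T y‖ ≤ ‖x - y‖) {z : H} (hz : T z = z) (ha0 : ∀ n, 0 ≤ a n)
    (ha1 : ∀ n, a n ≤ 1) (ha : ¬ Summable a) (hc0 : ∀ n, 0 ≤ c n) (hc1 : ∀ n, c n ≤ 1)
    (hlimsup : ∀ ε > 0, ∀ᶠ n in atTop, ⟪u - z, w n - z⟫ ≤ ε) :
    Tendsto y atTop (𝓝 z) := by
  have hrec : ∀ n, ‖y (n + 1) - z‖ ^ 2
      ≤ (1 - a n) * ‖y n - z‖ ^ 2 + a n * (2 * ⟪u - z, w n - z⟫) + 0 := fun n => by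
    have hyw : ‖y (n + 1) - z‖ ≤ ‖w n - z‖ := by
      rw [h.mann n]; exact norm_convexComb_apply_sub_fixedPoint_le hT (hc0 n) (hc1 n) hz _
    have hwz : w n - z = (1 - a n) • (y n - z) + a n • (u - z) := by
      rw [h.halpern n]; module
    have hhalpern :=
      norm_add_sq_le_norm_sq_add_two_inner ((1 - a n) • (y n - z)) (a n • (u - z))
    rw [← hwz, real_inner_smul_left, norm_smul, Real.norm_of_nonneg (sub_nonneg.2 (ha1 n)),
      mul_pow] at hhalpern
    have hsq : (1 - a n) ^ 2 * ‖y n - z‖ ^ 2 ≤ (1 - a n) * ‖y n - z‖ ^ 2 :=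
      mul_le_mul_of_nonneg_right (pow_le_of_le_one (sub_nonneg.2 (ha1 n))
        (sub_le_self _ (ha0 n)) two_ne_zero) (sq_nonneg _)
    nlinarith [pow_le_pow_left₀ (norm_nonneg _) hyw 2]
  have hsq := tendsto_zero_of_le_one_sub_mul_add (fun n => sq_nonneg ‖y n - z‖) ha0 ha1 ha
    (fun ε hε => (hlimsup (ε / 2) (half_pos hε)).mono fun n hn => by linarith)
    (fun _ => le_rfl) summable_zero hrec
  rw [tendsto_iff_norm_sub_tendsto_zero]
  simpa [Real.sqrt_sq (norm_nonneg _)] using hsq.sqrt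

theorem exists_tendsto [CompleteSpace H] (h : IsHalpernMann T u a c y w)
    (hT : ∀ x y, ‖T x - T y‖ ≤ ‖x - y‖) {p : H} (hp : T p = p) (ha0 : ∀ n, 0 ≤ a n)
    (ha1 : ∀ n, a n ≤ 1) (halim : Tendsto a atTop (𝓝 0)) (ha : ¬ Summable a)
    (hΔa : Summable fun n => |a (n + 1) - a n|) {δ : ℝ} (hδ : 0 < δ) (hcδ : ∀ n, δ ≤ c n)
    (hc1 : ∀ n, c n ≤ 1) (hΔc : Summable fun n => |c (n + 1) - c n|) :
    ∃ z, T z = z ∧ (∀ q, T q = q → ‖u - z‖ ≤ ‖u - q‖) ∧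
      Tendsto y atTop (𝓝 z) ∧ Tendsto w atTop (𝓝 z) := by
  obtain ⟨z, hz, hnearest, hlimsup⟩ := exists_nearest_fixedPoint_limsup_inner_nonpos hT u hp
  have hc0 : ∀ n, 0 ≤ c n := fun n => hδ.le.trans (hcδ n)
  have hball := h.mem_closedBall hT hp ha0 ha1 hc0 hc1
  have hu : ∀ n, ‖u - y n‖ ≤ 2 * max ‖y 0 - p‖ ‖u - p‖ := fun n => by
    linarith [mem_closedBall_iff_norm.1 (hball n).1, norm_sub_rev (y n) p,
      norm_sub_le_norm_sub_add_norm_sub u p (y n), le_max_right ‖y 0 - p‖ ‖u - p‖]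
  have hwT : ∀ n, ‖w n - T (w n)‖ ≤ 2 * max ‖y 0 - p‖ ‖u - p‖ := fun n => by
    have hTw : ‖p - T (w n)‖ ≤ ‖w n - p‖ := by
      simpa only [hp, norm_sub_rev p (w n)] using hT p (w n)
    linarith [mem_closedBall_iff_norm.1 (hball n).2,
      norm_sub_le_norm_sub_add_norm_sub (w n) p (T (w n))]
  have hreg := h.tendsto_norm_sub_succ hT ha0 ha1 ha hΔa hc0 hc1 hΔc hu hwT
  have hw_bdd : Bornology.IsBounded (Set.range w) :=
    Metric.isBounded_closedBall.subset (Set.range_subset_iff.2 fun n => (hball n).2)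
  have hy_lim := h.tendsto_of_limsup_inner_nonpos hT hz ha0 ha1 ha hc0 hc1
    (hlimsup w hw_bdd (h.tendsto_norm_sub_apply ha0 halim hδ hcδ hu hreg))
  refine ⟨z, hz, hnearest, hy_lim, ?_⟩
  have hlim := (((tendsto_const_nhds (x := (1 : ℝ))).sub halim).smul hy_lim).add
    (halim.smul_const u)
  rw [sub_zero, one_smul, zero_smul, add_zero] at hlim
  exact hlim.congr fun n => (h.halpern n).symm

end IsHalpernMann

end InnerProductSpace

theorem stmt19_general {H : Type*} [NormedAddCommGroup H] [InnerProductSpace ℝ H]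
    [CompleteSpace H]
    (α : ℝ) (hαpos : 0 < α)
    (U U' : H → H)
    (hU'ne : ∀ x y : H, ‖U' x - U' y‖ ≤ ‖x - y‖)
    (hUeq : ∀ x : H, U x = (1 - α) • x + α • U' x)
    (p : H) (hp : U p = p)
    (a β : ℕ → ℝ)
    (ha : ∀ n, a n ∈ Set.Icc (0 : ℝ) 1)
    (h1 : Tendsto a atTop (nhds 0))
    (h2 : Tendsto (fun n => ∑ i ∈ Finset.range n, a i) atTop atTop)
    (h3 : Summable (fun n => |a (n + 1) - a n|))
    (h4 : Summable (fun n => |β (n + 1) - β n|))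
    (γ : ℝ)
    (hγpos : 0 < γ)
    (hβγ : ∀ n, 1 - 1 / α + γ ≤ β n ∧ β n ≤ 1 - γ)
    (u : H) (x : ℕ → H)
    (hxodd : ∀ n, x (2 * n + 1) = (1 - a n) • x (2 * n) + a n • u)
    (hxeven : ∀ n, x (2 * n + 2) = (1 - β n) • U (x (2 * n + 1)) + β n • x (2 * n + 1)) :
    ∃ z, U z = z ∧ (∀ y, U y = y → ‖u - z‖ ≤ ‖u - y‖) ∧
      Tendsto x atTop (nhds z) := by
  have hfix : ∀ q, U q = q ↔ U' q = q := fun q => by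
    rw [hUeq]; exact one_sub_smul_add_smul_apply_eq_self_iff hαpos.ne' q
  have hcδ : ∀ n, α * γ ≤ α * (1 - β n) := fun n =>
    mul_le_mul_of_nonneg_left (by linarith [hβγ n]) hαpos.le
  have hc1 : ∀ n, α * (1 - β n) ≤ 1 := fun n => by
    calc α * (1 - β n) ≤ α * (1 / α) := by gcongr; linarith [hβγ n]
      _ = 1 := by field_simp
  have hΔc : Summable fun n => |α * (1 - β (n + 1)) - α * (1 - β n)| :=
    (h4.mul_left α).congr fun n => by
      rw [show α * (1 - β (n + 1)) - α * (1 - β n) = -(α * (β (n + 1) - β n)) by ring,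
        abs_neg, abs_mul, abs_of_pos hαpos]
  have hiter : IsHalpernMann U' u a (fun n => α * (1 - β n)) (fun n => x (2 * n))
      (fun n => x (2 * n + 1)) :=
    ⟨hxodd, fun n => by rw [show 2 * (n + 1) = 2 * n + 2 by ring, hxeven, hUeq]; module⟩
  obtain ⟨z, hz, hnearest, hy_lim, hw_lim⟩ := hiter.exists_tendsto hU'ne ((hfix p).1 hp)
    (fun n => (ha n).1) (fun n => (ha n).2) h1
    ((not_summable_iff_tendsto_nat_atTop_of_nonneg fun n => (ha n).1).2 h2) h3
    (mul_pos hαpos hγpos) hcδ hc1 hΔc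
  exact ⟨z, (hfix z).2 hz, fun q hq => hnearest q ((hfix q).1 hq),
    tendsto_of_tendsto_two_mul_of_tendsto_two_mul_add_one hy_lim hw_lim⟩

/-- Strong convergence of the Tikhonov-regularized Krasnoselskii–Mann iteration
for an `α`-averaged operator `U` in a Hilbert space: the iteration converges
strongly to the metric projection of `u` onto `Fix(U)`. -/
theorem stmt19 {H : Type*} [NormedAddCommGroup H] [InnerProductSpace ℝ H]
    [CompleteSpace H]
    (α : ℝ) (hαpos : 0 < α) (hα1 : α ≤ 1)
    (U U' : H → H)
    (hU'ne : ∀ x y : H, ‖U' x - U' y‖ ≤ ‖x - y‖)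
    (hUeq : ∀ x : H, U x = (1 - α) • x + α • U' x)
    (p : H) (hp : U p = p)
    (a β : ℕ → ℝ)
    (ha : ∀ n, a n ∈ Set.Icc (0 : ℝ) 1)
    (hβ : ∀ n, β n ∈ Set.Icc (1 - 1 / α) 1)
    (h1 : Tendsto a atTop (nhds 0))
    (h2 : Tendsto (fun n => ∑ i ∈ Finset.range n, a i) atTop atTop)
    (h3 : Summable (fun n => |a (n + 1) - a n|))
    (h4 : Summable (fun n => |β (n + 1) - β n|))
    (σ γ : ℝ) (hσ : σ ∈ Set.Ioo (0 : ℝ) 1) (hσα : σ ≤ α)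
    (hγpos : 0 < γ) (hγle : γ ≤ 1 / (2 * σ))
    (hβγ : ∀ n, 1 - 1 / α + γ ≤ β n ∧ β n ≤ 1 - γ)
    (x₀ u : H) (x : ℕ → H) (hx0 : x 0 = x₀)
    (hxodd : ∀ n, x (2 * n + 1) = (1 - a n) • x (2 * n) + a n • u)
    (hxeven : ∀ n, x (2 * n + 2) = (1 - β n) • U (x (2 * n + 1)) + β n • x (2 * n + 1)) :
    ∃ z, U z = z ∧ (∀ y, U y = y → ‖u - z‖ ≤ ‖u - y‖) ∧
      Tendsto x atTop (nhds z) :=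
  stmt19_general α hαpos U U' hU'ne hUeq p hp a β ha h1 h2 h3 h4 γ hγpos hβγ u x hxodd hxeven
end
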